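/- arXiv:2402.01984 — 8 statements merged into one kernel-verified Lean document; each statement's English description precedes it below -/
import Mathlib

section
/- Let f : [a,b] → ℝ be a function (not necessarily continuous). If the upper right Dini derivative D⁺f(x) = limsup_{h→0⁺} (f(x+h)-f(x))/h ≤ 0 for all x ∈ [a,b), and the upper left Dini derivative D⁻f(x) = limsup_{h→0⁻} (f(x+h)-f(x))/h ≤ 0 for all x ∈ (a,b], then f is monotonically decreasing on [a,b]. -/
open Filter Set

/-- Upper right Dini derivative: `D⁺ f x = limsup_{h → 0⁺} (f (x+h) - f x) / h`. -/
noncomputable def upperDiniRight (f : ℝ → ℝ) (x : ℝ) : EReal :=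
  Filter.limsup (fun h : ℝ => (((f (x + h) - f x) / h : ℝ) : EReal)) (nhdsWithin 0 (Set.Ioi 0))

/-- Upper left Dini derivative: `D⁻ f x = limsup_{h → 0⁻} (f (x+h) - f x) / h`. -/
noncomputable def upperDiniLeft (f : ℝ → ℝ) (x : ℝ) : EReal :=
  Filter.limsup (fun h : ℝ => (((f (x + h) - f x) / h : ℝ) : EReal)) (nhdsWithin 0 (Set.Iio 0))

lemma dini_right_extract (f : ℝ → ℝ) (x ε : ℝ) (hε : 0 < ε)
    (h : upperDiniRight f x ≤ 0) :
    ∃ δ > 0, ∀ h', 0 < h' → h' < δ → f (x + h') < f x + ε * h' := by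
  have hlt : Filter.limsup (fun h : ℝ => (((f (x + h) - f x) / h : ℝ) : EReal))
      (nhdsWithin 0 (Set.Ioi 0)) < (ε : EReal) :=
    lt_of_le_of_lt h (by exact_mod_cast EReal.coe_pos.mpr hε)
  have hev := Filter.eventually_lt_of_limsup_lt hlt
  rw [Filter.Eventually, Metric.mem_nhdsWithin_iff] at hev
  obtain ⟨δ, hδ, hsub⟩ := hev
  refine ⟨δ, hδ, fun h' h0 hδ' => ?_⟩
  have hmem : h' ∈ Metric.ball (0:ℝ) δ ∩ Set.Ioi 0 := by
    constructor
    · simp [Real.dist_eq, abs_of_pos h0, hδ']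
    · exact h0
  have := hsub hmem
  have hr : (f (x + h') - f x) / h' < ε := by exact_mod_cast this
  have := (div_lt_iff₀ h0).mp hr
  linarith

lemma dini_left_extract (f : ℝ → ℝ) (x ε : ℝ) (hε : 0 < ε)
    (h : upperDiniLeft f x ≤ 0) :
    ∃ δ > 0, ∀ h', -δ < h' → h' < 0 → ε * h' < f (x + h') - f x := by
  have hlt : Filter.limsup (fun h : ℝ => (((f (x + h) - f x) / h : ℝ) : EReal))
      (nhdsWithin 0 (Set.Iio 0)) < (ε : EReal) :=
    lt_of_le_of_lt h (by exact_mod_cast EReal.coe_pos.mpr hε)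
  have hev := Filter.eventually_lt_of_limsup_lt hlt
  rw [Filter.Eventually, Metric.mem_nhdsWithin_iff] at hev
  obtain ⟨δ, hδ, hsub⟩ := hev
  refine ⟨δ, hδ, fun h' hδ' h0 => ?_⟩
  have hmem : h' ∈ Metric.ball (0:ℝ) δ ∩ Set.Iio 0 := by
    constructor
    · simp only [Metric.mem_ball, Real.dist_eq, sub_zero, abs_of_neg h0]; linarith
    · exact h0
  have := hsub hmem
  have hr : (f (x + h') - f x) / h' < ε := by exact_mod_cast this
  exact (div_lt_iff_of_neg h0).mp hr

lemma dini_key (f : ℝ → ℝ) (a b : ℝ)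
    (hplus : ∀ x ∈ Set.Ico a b, upperDiniRight f x ≤ 0)
    (hminus : ∀ x ∈ Set.Ioc a b, upperDiniLeft f x ≤ 0)
    (x y : ℝ) (hx : x ∈ Set.Icc a b) (hy : y ∈ Set.Icc a b) (hxy : x ≤ y)
    (ε : ℝ) (hε : 0 < ε) : f y ≤ f x + ε * (y - x) := by
  set S : Set ℝ := {t | t ∈ Set.Icc x y ∧ f t ≤ f x + ε * (t - x)} with hS
  have hxS : x ∈ S := ⟨⟨le_refl x, hxy⟩, by simp⟩
  have hSne : S.Nonempty := ⟨x, hxS⟩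
  have hSbdd : BddAbove S := ⟨y, fun t ht => ht.1.2⟩
  set c := sSup S with hc
  have hxc : x ≤ c := le_csSup hSbdd hxS
  have hcy : c ≤ y := csSup_le hSne fun t ht => ht.1.2
  -- Step 1 : f c ≤ f x + ε * (c - x)
  have hfc : f c ≤ f x + ε * (c - x) := by
    rcases eq_or_lt_of_le hxc with heq | hlt
    · rw [← heq]; simp
    · have hcab : c ∈ Set.Ioc a b := ⟨lt_of_le_of_lt hx.1 hlt, le_trans hcy hy.2⟩
      obtain ⟨δ, hδ, hδp⟩ := dini_left_extract f c ε hε (hminus c hcab)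
      have hlt2 : c - min δ (c - x) < sSup S := by
        have : 0 < min δ (c - x) := lt_min hδ (by linarith)
        rw [← hc]; linarith
      obtain ⟨t, htS, htgt⟩ := exists_lt_of_lt_csSup hSne hlt2
      have htc : t ≤ c := le_csSup hSbdd htS
      rcases eq_or_lt_of_le htc with heq | hlt3
      · rw [← heq]; exact le_trans htS.2 (by nlinarith)
      · have h1 : -δ < t - c := by
          have := lt_min hδ (show (0:ℝ) < c - x by linarith)
          have := min_le_left δ (c - x); linarith
        have h2 : t - c < 0 := by linarith
        have := hδp (t - c) h1 h2
        rw [show c + (t - c) = t by ring] at this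
        have := htS.2
        nlinarith
  -- Step 2 : c = y
  have hcey : c = y := by
    by_contra hne
    have hclty : c < y := lt_of_le_of_ne hcy hne
    have hcab : c ∈ Set.Ico a b := ⟨le_trans hx.1 hxc, lt_of_lt_of_le hclty hy.2⟩
    obtain ⟨δ, hδ, hδp⟩ := dini_right_extract f c ε hε (hplus c hcab)
    set h0 := min (δ / 2) (y - c) with hh0
    have hh0pos : 0 < h0 := lt_min (by linarith) (by linarith)
    have hh0δ : h0 < δ := lt_of_le_of_lt (min_le_left _ _) (by linarith)
    have hfch := hδp h0 hh0pos hh0δ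
    have hmemS : c + h0 ∈ S := by
      refine ⟨⟨by linarith, ?_⟩, ?_⟩
      · have := min_le_right (δ / 2) (y - c); rw [hh0]; linarith
      · nlinarith
    have := le_csSup hSbdd hmemS
    linarith
  rw [← hcey]; exact hfc

theorem dini_nonpos_imp_antitone (f : ℝ → ℝ) (a b : ℝ)
    (hplus : ∀ x ∈ Set.Ico a b, upperDiniRight f x ≤ 0)
    (hminus : ∀ x ∈ Set.Ioc a b, upperDiniLeft f x ≤ 0) :
    AntitoneOn f (Set.Icc a b) := by
  intro x hx y hy hxy
  by_contra hcon
  push_neg at hcon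
  have hylt : x < y := by
    rcases eq_or_lt_of_le hxy with heq | h
    · exfalso; rw [heq] at hcon; exact lt_irrefl _ hcon
    · exact h
  set ε := (f y - f x) / (2 * (y - x)) with hε
  have hεpos : 0 < ε := div_pos (by linarith) (by linarith)
  have := dini_key f a b hplus hminus x y hx hy hxy ε hεpos
  have hεv : ε * (y - x) = (f y - f x) / 2 := by
    have hne : y - x ≠ 0 := by linarith
    rw [hε]
    field_simp
  linarith
end

section
/- Let f : [0,l] → ℝ be nonnegative and Lebesgue integrable with f(0)=0 and D⁺f(0)=1, such that f(t)/sn_k(t) is decreasing on (0,l], where l < π/√k if k > 0. If ∫₀ˣ f(t)ᵐ dt = ∫₀ʳ sn_k(t)ᵐ dt for some x, r ∈ [0,l] and a positive integer m, then f(x) ≤ sn_k(r); and if f(x) = sn_k(r) then x = r and f(t) = sn_k(t) on [0,r]. -/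
open Filter Set MeasureTheory intervalIntegral

/-- `sn_k`: the solution of `y'' + k y = 0` with `y 0 = 0`, `y' 0 = 1`. -/
noncomputable def snK (k t : ℝ) : ℝ :=
  if 0 < k then Real.sin (Real.sqrt k * t) / Real.sqrt k
  else if k < 0 then Real.sinh (Real.sqrt (-k) * t) / Real.sqrt (-k)
  else t

/-- `sn_k'`: the derivative of `sn_k`. -/
noncomputable def snK' (k t : ℝ) : ℝ :=
  if 0 < k then Real.cos (Real.sqrt k * t)
  else if k < 0 then Real.cosh (Real.sqrt (-k) * t)
  else 1

lemma snK_zero (k : ℝ) : snK k 0 = 0 := by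
  unfold snK; split_ifs <;> simp

lemma snK'_zero (k : ℝ) : snK' k 0 = 1 := by
  unfold snK'; split_ifs <;> simp

lemma hasDerivAt_snK (k t : ℝ) : HasDerivAt (snK k) (snK' k t) t := by
  unfold snK snK'
  split_ifs with h1 h2
  · have hb : Real.sqrt k ≠ 0 := ne_of_gt (Real.sqrt_pos.2 h1)
    have := ((Real.hasDerivAt_sin (Real.sqrt k * t)).comp t
      ((hasDerivAt_id t).const_mul (Real.sqrt k))).div_const (Real.sqrt k)
    simpa [mul_comm, mul_div_assoc, mul_div_cancel_left₀, hb, mul_one,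
      mul_div_cancel_right₀] using this
  · have hb : Real.sqrt (-k) ≠ 0 := ne_of_gt (Real.sqrt_pos.2 (by linarith))
    have := ((Real.hasDerivAt_sinh (Real.sqrt (-k) * t)).comp t
      ((hasDerivAt_id t).const_mul (Real.sqrt (-k)))).div_const (Real.sqrt (-k))
    simpa [mul_comm, mul_div_assoc, hb, mul_one] using this
  · simpa using hasDerivAt_id' t

lemma snK_pos {k l t : ℝ} (hk : 0 < k → l < Real.pi / Real.sqrt k)
    (ht : t ∈ Set.Ioc 0 l) : 0 < snK k t := by
  obtain ⟨ht0, htl⟩ := ht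
  unfold snK
  split_ifs with h1 h2
  · have hb : (0:ℝ) < Real.sqrt k := Real.sqrt_pos.2 h1
    apply div_pos _ hb
    apply Real.sin_pos_of_pos_of_lt_pi (by positivity)
    calc Real.sqrt k * t ≤ Real.sqrt k * l := by nlinarith
      _ < Real.pi := by
          have := hk h1
          rw [lt_div_iff₀ hb] at this; linarith [this]
  · have hb : (0:ℝ) < Real.sqrt (-k) := Real.sqrt_pos.2 (by linarith)
    exact div_pos (by positivity) hb
  · exact ht0

lemma snK_nonneg {k l t : ℝ} (hk : 0 < k → l < Real.pi / Real.sqrt k)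
    (ht : t ∈ Set.Icc 0 l) : 0 ≤ snK k t := by
  rcases eq_or_lt_of_le ht.1 with h | h
  · rw [← h]; simp [snK]
  · exact (snK_pos hk ⟨h, ht.2⟩).le


lemma wronskian_snK {k l u t : ℝ} (hk : 0 < k → l < Real.pi / Real.sqrt k)
    (hu : 0 ≤ u) (hut : u ≤ t) (htl : t ≤ l) :
    snK' k t * snK k u ≤ snK' k u * snK k t := by
  unfold snK snK'
  split_ifs with h1 h2
  · have hb : (0:ℝ) < Real.sqrt k := Real.sqrt_pos.2 h1
    rw [mul_div_assoc', mul_div_assoc', div_le_div_iff₀ hb hb]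
    have key : 0 ≤ Real.sin (Real.sqrt k * t - Real.sqrt k * u) := by
      apply Real.sin_nonneg_of_nonneg_of_le_pi
      · nlinarith
      · have hl : Real.sqrt k * l < Real.pi := by
          have := hk h1
          rw [lt_div_iff₀ hb] at this; linarith
        nlinarith
    rw [Real.sin_sub] at key
    nlinarith
  · have hb : (0:ℝ) < Real.sqrt (-k) := Real.sqrt_pos.2 (by linarith)
    rw [mul_div_assoc', mul_div_assoc', div_le_div_iff₀ hb hb]
    have key : 0 ≤ Real.sinh (Real.sqrt (-k) * t - Real.sqrt (-k) * u) :=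
      Real.sinh_nonneg_iff.2 (by nlinarith)
    rw [Real.sinh_sub] at key
    nlinarith
  · nlinarith

lemma continuous_snK (k : ℝ) : Continuous (snK k) :=
  continuous_iff_continuousAt.2 fun t => (hasDerivAt_snK k t).continuousAt

lemma continuous_snKm (k : ℝ) (m : ℕ) : Continuous (fun t => snK k t ^ m) :=
  (continuous_snK k).pow m

lemma hasDerivAt_Sm (k : ℝ) (m : ℕ) (u : ℝ) :
    HasDerivAt (fun u => ∫ t in (0:ℝ)..u, snK k t ^ m) (snK k u ^ m) u :=
  intervalIntegral.integral_hasDerivAt_right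
    ((continuous_snKm k m).intervalIntegrable _ _)
    ((continuous_snKm k m).stronglyMeasurable.stronglyMeasurableAtFilter)
    (continuous_snKm k m).continuousAt

lemma lemC {k l : ℝ} {m : ℕ} (hk : 0 < k → l < Real.pi / Real.sqrt k) (hm : 0 < m)
    {t u : ℝ} (ht : t ∈ Set.Icc 0 l) (hu : u ∈ Set.Icc 0 t) :
    (m : ℝ) * snK' k t * (∫ s in (0:ℝ)..u, snK k s ^ m) ≤ snK k u ^ m * snK k t := by
  set S : ℝ → ℝ := fun u => ∫ s in (0:ℝ)..u, snK k s ^ m with hS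
  set Φ : ℝ → ℝ := fun u => snK k u ^ m * snK k t - ((m : ℝ) * snK' k t) * S u with hΦ
  have hderiv : ∀ u : ℝ, HasDerivAt Φ
      ((m : ℝ) * snK k u ^ (m - 1) * snK' k u * snK k t - ((m : ℝ) * snK' k t) * snK k u ^ m) u :=
    fun u => (((hasDerivAt_snK k u).pow m).mul_const (snK k t)).sub
      ((hasDerivAt_Sm k m u).const_mul _)
  have hmono : MonotoneOn Φ (Set.Icc 0 t) := by
    apply monotoneOn_of_deriv_nonneg (convex_Icc 0 t)
    · exact Continuous.continuousOn (by
        exact continuous_iff_continuousAt.2 fun u => (hderiv u).continuousAt)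
    · intro u _
      exact (hderiv u).differentiableAt.differentiableWithinAt
    · intro u hu'
      rw [interior_Icc] at hu'
      rw [(hderiv u).deriv]
      have h1 : 0 ≤ snK k u ^ (m - 1) :=
        pow_nonneg (snK_nonneg hk ⟨hu'.1.le, hu'.2.le.trans ht.2⟩) _
      have h2 : snK' k t * snK k u ≤ snK' k u * snK k t :=
        wronskian_snK hk hu'.1.le hu'.2.le ht.2
      have h3 : snK k u ^ m = snK k u ^ (m - 1) * snK k u := by
        rw [← pow_succ, Nat.sub_add_cancel hm]
      rw [h3]
      nlinarith [mul_le_mul_of_nonneg_left h2 h1]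
  have h0 : Φ 0 ≤ Φ u := hmono ⟨le_refl 0, hu.1.trans hu.2⟩ hu (hu.1)
  have hΦ0 : Φ 0 = 0 := by
    simp [hΦ, hS, snK, zero_pow hm.ne']
  rw [hΦ0] at h0
  simp only [hΦ, hS] at h0
  linarith

lemma lemD {k l : ℝ} {m : ℕ} (hk : 0 < k → l < Real.pi / Real.sqrt k) (hm : 0 < m)
    {r x : ℝ} (hr0 : 0 ≤ r) (hrx : r ≤ x) (hxl : x ≤ l) :
    snK k x ^ m * (∫ t in (0:ℝ)..r, snK k t ^ m) ≤
      snK k r ^ m * (∫ t in (0:ℝ)..x, snK k t ^ m) := by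
  set S : ℝ → ℝ := fun u => ∫ s in (0:ℝ)..u, snK k s ^ m with hS
  set G : ℝ → ℝ := fun t => snK k r ^ m * S t - snK k t ^ m * S r with hG
  have hderiv : ∀ t : ℝ, HasDerivAt G
      (snK k r ^ m * snK k t ^ m - ((m : ℝ) * snK k t ^ (m - 1) * snK' k t) * S r) t :=
    fun t => ((hasDerivAt_Sm k m t).const_mul _).sub
      (((hasDerivAt_snK k t).pow m).mul_const (S r))
  have hmono : MonotoneOn G (Set.Icc r x) := by
    apply monotoneOn_of_deriv_nonneg (convex_Icc r x)
    · exact Continuous.continuousOn (by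
        exact continuous_iff_continuousAt.2 fun u => (hderiv u).continuousAt)
    · intro u _
      exact (hderiv u).differentiableAt.differentiableWithinAt
    · intro t ht'
      rw [interior_Icc] at ht'
      rw [(hderiv t).deriv]
      have htI : t ∈ Set.Icc 0 l := ⟨hr0.trans ht'.1.le, ht'.2.le.trans hxl⟩
      have hC : (m : ℝ) * snK' k t * S r ≤ snK k r ^ m * snK k t :=
        lemC hk hm htI ⟨hr0, ht'.1.le⟩
      have h1 : 0 ≤ snK k t ^ (m - 1) := pow_nonneg (snK_nonneg hk htI) _
      have h3 : snK k t ^ m = snK k t ^ (m - 1) * snK k t := by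
        rw [← pow_succ, Nat.sub_add_cancel hm]
      rw [h3]
      nlinarith [mul_le_mul_of_nonneg_left hC h1]
  have h0 : G r ≤ G x := hmono ⟨le_refl r, hrx⟩ ⟨hrx, le_refl x⟩ hrx
  have hGr : G r = 0 := by simp only [hG, sub_self]
  rw [hGr] at h0
  simp only [hG, hS] at h0
  linarith

lemma tendsto_slope_snK (k : ℝ) :
    Filter.Tendsto (fun h => snK k h / h) (nhdsWithin 0 (Set.Ioi 0)) (nhds 1) := by
  have h1 : Filter.Tendsto (slope (snK k) 0) (nhdsWithin 0 {(0:ℝ)}ᶜ) (nhds 1) := by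
    have := hasDerivAt_iff_tendsto_slope.1 (hasDerivAt_snK k 0)
    rwa [snK'_zero] at this
  have h2 : Filter.Tendsto (slope (snK k) 0) (nhdsWithin 0 (Set.Ioi 0)) (nhds 1) :=
    h1.mono_left (nhdsWithin_mono 0 (fun y hy => ne_of_gt hy))
  refine h2.congr' ?_
  filter_upwards [self_mem_nhdsWithin] with h hh
  simp [slope_def_field, snK_zero]

theorem volume_comparison_boundary (k l : ℝ) (f : ℝ → ℝ) (m : ℕ) (hm : 0 < m)
    (hk : 0 < k → l < Real.pi / Real.sqrt k)
    (hnn : ∀ t ∈ Set.Icc 0 l, 0 ≤ f t)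
    (hint : MeasureTheory.IntegrableOn f (Set.Icc 0 l))
    (hf0 : f 0 = 0)
    (hdini : upperDiniRight f 0 = 1)
    (hdec : AntitoneOn (fun t => f t / snK k t) (Set.Ioc 0 l))
    (x r : ℝ) (hx : x ∈ Set.Icc 0 l) (hr : r ∈ Set.Icc 0 l)
    (heq : (∫ t in (0:ℝ)..x, f t ^ m) = ∫ t in (0:ℝ)..r, snK k t ^ m) :
    f x ≤ snK k r ∧ (f x = snK k r → x = r ∧ ∀ t ∈ Set.Icc 0 r, f t = snK k t) := by
  have hdini' : Filter.limsup (fun h : ℝ => ((f h / h : ℝ) : EReal))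
      (nhdsWithin 0 (Set.Ioi 0)) = 1 := by
    simpa [upperDiniRight, hf0] using hdini
  have hslope := tendsto_slope_snK k
  -- Step 1 : the ratio is at most 1
  have hc1 : ∀ t ∈ Set.Ioc 0 l, f t / snK k t ≤ 1 := by
    intro t0 ht0
    by_contra hgt
    push_neg at hgt
    set c1 := f t0 / snK k t0 with hc1def
    set a := (1 + c1) / 2 with hadef
    have ha1 : 1 < a := by simp only [hadef]; linarith
    have hac : a < c1 := by simp only [hadef]; linarith
    have hc1pos : 0 < c1 := by linarith
    have hev1 : ∀ᶠ h in nhdsWithin 0 (Set.Ioi 0), h ∈ Set.Ioc 0 t0 :=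
      Ioc_mem_nhdsGT_of_mem ⟨le_refl 0, ht0.1⟩
    have hev2 : ∀ᶠ h in nhdsWithin 0 (Set.Ioi 0), a / c1 < snK k h / h :=
      hslope.eventually (eventually_gt_nhds (by rw [div_lt_one hc1pos]; exact hac))
    have hev : ∀ᶠ h in nhdsWithin 0 (Set.Ioi 0),
        (a : EReal) ≤ ((f h / h : ℝ) : EReal) := by
      filter_upwards [hev1, hev2] with h hh1 hh2
      have hh0 : 0 < h := hh1.1
      have hhl : h ∈ Set.Ioc 0 l := ⟨hh0, hh1.2.trans ht0.2⟩
      have hsh : 0 < snK k h := snK_pos hk hhl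
      have hch : c1 ≤ f h / snK k h := hdec hhl ht0 hh1.2
      have hfh : f h / h = (f h / snK k h) * (snK k h / h) := by
        field_simp
      have : a ≤ f h / h := by
        rw [hfh]
        calc a = c1 * (a / c1) := by field_simp
          _ ≤ (f h / snK k h) * (snK k h / h) :=
            mul_le_mul hch hh2.le (by positivity) (le_trans hc1pos.le hch)
      exact_mod_cast EReal.coe_le_coe_iff.2 this
    have := le_limsup_of_frequently_le' hev.frequently
    rw [hdini'] at this
    rw [show (1 : EReal) = ((1:ℝ) : EReal) from rfl, EReal.coe_le_coe_iff] at this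
    linarith
  have hl0 : (0:ℝ) ≤ l := hx.1.trans hx.2
  -- f ≤ snK on [0, l]
  have hfle : ∀ t ∈ Set.Icc 0 l, f t ≤ snK k t := by
    intro t ht
    rcases eq_or_lt_of_le ht.1 with h0 | h0
    · rw [← h0, hf0, snK_zero]
    · have hst : 0 < snK k t := snK_pos hk ⟨h0, ht.2⟩
      have := hc1 t ⟨h0, ht.2⟩
      rwa [div_le_one hst] at this
  -- integrability of f ^ m
  have hmeas : AEStronglyMeasurable f (volume.restrict (Set.Icc 0 l)) :=
    hint.aestronglyMeasurable
  have hfm_int : MeasureTheory.IntegrableOn (fun t => f t ^ m) (Set.Icc 0 l) := by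
    apply MeasureTheory.Integrable.mono' ((continuous_snKm k m).integrableOn_Icc)
    · exact (continuous_pow m).comp_aestronglyMeasurable hmeas
    · rw [MeasureTheory.ae_restrict_iff' measurableSet_Icc]
      filter_upwards with t ht
      rw [Real.norm_of_nonneg (pow_nonneg (hnn t ht) m)]
      exact pow_le_pow_left₀ (hnn t ht) (hfle t ht) m
  set S : ℝ → ℝ := fun u => ∫ t in (0:ℝ)..u, snK k t ^ m with hSdef
  have hS0 : S 0 = 0 := intervalIntegral.integral_same
  have hSmono : StrictMonoOn S (Set.Icc 0 l) := by
    intro u hu v hv huv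
    have hadd : S u + ∫ t in u..v, snK k t ^ m = S v :=
      intervalIntegral.integral_add_adjacent_intervals
        ((continuous_snKm k m).intervalIntegrable _ _)
        ((continuous_snKm k m).intervalIntegrable _ _)
    have hpos : 0 < ∫ t in u..v, snK k t ^ m := by
      apply intervalIntegral.intervalIntegral_pos_of_pos_on
        ((continuous_snKm k m).intervalIntegrable _ _) _ huv
      intro t ht
      exact pow_pos (snK_pos hk ⟨lt_of_le_of_lt hu.1 ht.1, ht.2.le.trans hv.2⟩) m
    linarith
  rcases eq_or_lt_of_le hx.1 with hx0 | hx0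
  · -- x = 0
    have hx0' : x = 0 := hx0.symm
    subst hx0'
    rw [intervalIntegral.integral_same] at heq
    have hr0 : r = 0 := by
      by_contra hr0
      have hrpos : 0 < r := lt_of_le_of_ne hr.1 (Ne.symm hr0)
      have h2 : S 0 < S r := hSmono (Set.left_mem_Icc.2 hl0) hr hrpos
      rw [hS0] at h2
      have h3 : S r = 0 := heq.symm
      linarith
    subst hr0
    rw [hf0, snK_zero]
    exact ⟨le_refl 0, fun _ => ⟨rfl, fun t ht => by
      have : t = 0 := le_antisymm ht.2 ht.1
      rw [this, hf0, snK_zero]⟩⟩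
  · -- x > 0
    have hxl := hx.2
    have hsx : 0 < snK k x := snK_pos hk ⟨hx0, hxl⟩
    set c0 := f x / snK k x with hc0def
    have hc0nn : 0 ≤ c0 := div_nonneg (hnn x hx) hsx.le
    have hfx : f x = c0 * snK k x := by
      rw [hc0def]; field_simp
    have hptw : ∀ t ∈ Set.Ioc 0 x, c0 ^ m * snK k t ^ m ≤ f t ^ m := by
      intro t ht
      have hst : 0 < snK k t := snK_pos hk ⟨ht.1, ht.2.trans hxl⟩
      have hle : c0 ≤ f t / snK k t := hdec ⟨ht.1, ht.2.trans hxl⟩ ⟨hx0, hxl⟩ ht.2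
      have h1 : c0 * snK k t ≤ f t := by
        rw [← le_div_iff₀ hst]; exact hle
      calc c0 ^ m * snK k t ^ m = (c0 * snK k t) ^ m := (mul_pow _ _ _).symm
        _ ≤ f t ^ m := pow_le_pow_left₀ (by positivity) h1 m
    -- rewrite the interval integrals as set integrals
    have hIf : (∫ t in (0:ℝ)..x, f t ^ m) = ∫ t in Set.Ioc 0 x, f t ^ m :=
      intervalIntegral.integral_of_le hx0.le
    have hIs : S x = ∫ t in Set.Ioc 0 x, snK k t ^ m :=
      intervalIntegral.integral_of_le hx0.le
    have hfm_int' : MeasureTheory.IntegrableOn (fun t => f t ^ m) (Set.Ioc 0 x) :=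
      hfm_int.mono_set (fun t ht => ⟨ht.1.le, ht.2.trans hxl⟩)
    have hsm_int' : MeasureTheory.IntegrableOn (fun t => snK k t ^ m) (Set.Ioc 0 x) :=
      (continuous_snKm k m).integrableOn_Ioc
    -- S r ≤ S x, hence r ≤ x
    have hSr : S r = ∫ t in Set.Ioc 0 x, f t ^ m := by
      show (∫ t in (0:ℝ)..r, snK k t ^ m) = _
      rw [← heq, hIf]
    have hSrx : S r ≤ S x := by
      rw [hSr, hIs]
      apply MeasureTheory.setIntegral_mono_on hfm_int' hsm_int' measurableSet_Ioc
      intro t ht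
      exact pow_le_pow_left₀ (hnn t ⟨ht.1.le, ht.2.trans hxl⟩)
        (hfle t ⟨ht.1.le, ht.2.trans hxl⟩) m
    have hrx : r ≤ x := by
      by_contra h
      push_neg at h
      have := hSmono hx hr h
      linarith
    have hD : snK k x ^ m * S r ≤ snK k r ^ m * S x := lemD hk hm hr.1 hrx hxl
    -- lower bound : c0 ^ m * S x ≤ S r
    have hlow : c0 ^ m * S x ≤ S r := by
      rw [hSr, hIs, ← MeasureTheory.integral_const_mul]
      apply MeasureTheory.setIntegral_mono_on
        (hsm_int'.const_mul _) hfm_int' measurableSet_Ioc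
      exact hptw
    have hSx_pos : 0 < S x := by
      apply intervalIntegral.intervalIntegral_pos_of_pos_on
        ((continuous_snKm k m).intervalIntegrable _ _) _ hx0
      intro t ht
      exact pow_pos (snK_pos hk ⟨ht.1, ht.2.le.trans hxl⟩) m
    have hsxm : (0:ℝ) < snK k x ^ m := pow_pos hsx m
    have hkey : f x ^ m * S x ≤ snK k r ^ m * S x := by
      calc f x ^ m * S x = snK k x ^ m * (c0 ^ m * S x) := by rw [hfx, mul_pow]; ring
        _ ≤ snK k x ^ m * S r := by nlinarith
        _ ≤ snK k r ^ m * S x := hD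
    have hfxm : f x ^ m ≤ snK k r ^ m := le_of_mul_le_mul_right hkey hSx_pos
    have hsr_nonneg : 0 ≤ snK k r := snK_nonneg hk hr
    have hineq : f x ≤ snK k r :=
      (pow_le_pow_iff_left₀ (hnn x hx) hsr_nonneg hm.ne').1 hfxm
    refine ⟨hineq, fun hfeq => ?_⟩
    -- equality case
    have hfxm_eq : f x ^ m = snK k r ^ m := by rw [hfeq]
    have hSr_eq : S r = c0 ^ m * S x := by
      have h1 : snK k r ^ m * S x = snK k x ^ m * (c0 ^ m * S x) := by
        rw [← hfxm_eq, hfx, mul_pow]; ring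
      have h2 : snK k x ^ m * S r ≤ snK k x ^ m * (c0 ^ m * S x) := hD.trans_eq h1
      have h3 : snK k x ^ m * (c0 ^ m * S x) ≤ snK k x ^ m * S r :=
        mul_le_mul_of_nonneg_left hlow hsxm.le
      have := le_antisymm h2 h3
      exact mul_left_cancel₀ hsxm.ne' this
    -- the integral of the nonneg function f^m - c0^m snK^m vanishes
    have hint_eq : ∫ t in Set.Ioc 0 x, (f t ^ m - c0 ^ m * snK k t ^ m) = 0 := by
      rw [MeasureTheory.integral_sub hfm_int' (hsm_int'.const_mul _)]
      rw [MeasureTheory.integral_const_mul, ← hIs, ← hSr, hSr_eq]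
      ring
    have hae0 : ∀ᵐ t ∂(volume.restrict (Set.Ioc 0 x)),
        f t ^ m - c0 ^ m * snK k t ^ m = 0 := by
      have hnonneg : 0 ≤ᵐ[volume.restrict (Set.Ioc 0 x)]
          fun t => f t ^ m - c0 ^ m * snK k t ^ m := by
        filter_upwards [MeasureTheory.ae_restrict_mem measurableSet_Ioc] with t ht
        have := hptw t ht
        simp only [Pi.zero_apply]
        linarith
      have hintg : MeasureTheory.Integrable
          (fun t => f t ^ m - c0 ^ m * snK k t ^ m)
          (volume.restrict (Set.Ioc 0 x)) := hfm_int'.sub (hsm_int'.const_mul _)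
      exact (MeasureTheory.integral_eq_zero_iff_of_nonneg_ae hnonneg hintg).1 hint_eq
    -- upgrade to everywhere on Ioc 0 x
    have haef : ∀ᵐ t ∂(volume.restrict (Set.Ioc 0 x)), f t = c0 * snK k t := by
      filter_upwards [hae0, MeasureTheory.ae_restrict_mem measurableSet_Ioc] with t ht htm
      have hst : 0 < snK k t := snK_pos hk ⟨htm.1, htm.2.trans hxl⟩
      have hpow : f t ^ m = (c0 * snK k t) ^ m := by rw [mul_pow]; linarith
      have hfnn := hnn t ⟨htm.1.le, htm.2.trans hxl⟩
      have hcnn : 0 ≤ c0 * snK k t := by positivity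
      exact le_antisymm
        ((pow_le_pow_iff_left₀ hfnn hcnn hm.ne').1 hpow.le)
        ((pow_le_pow_iff_left₀ hcnn hfnn hm.ne').1 hpow.ge)
    have hall : ∀ t ∈ Set.Ioc 0 x, f t = c0 * snK k t := by
      intro t ht
      have hsub : Set.Ioo 0 t ⊆ Set.Ioc 0 x := fun s hs => ⟨hs.1, hs.2.le.trans ht.2⟩
      have haef' : ∀ᵐ s ∂(volume.restrict (Set.Ioo 0 t)), f s = c0 * snK k s :=
        MeasureTheory.ae_restrict_of_ae_restrict_of_subset hsub haef
      have hne : (volume.restrict (Set.Ioo 0 t)) ≠ 0 := by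
        simp only [ne_eq, Measure.restrict_eq_zero]
        simp [Real.volume_Ioo, ht.1]
      have : MeasureTheory.ae (volume.restrict (Set.Ioo 0 t)) |>.NeBot :=
        MeasureTheory.ae_neBot.2 hne
      obtain ⟨t1, ht1eq, ht1mem⟩ :=
        (haef'.and (MeasureTheory.ae_restrict_mem measurableSet_Ioo)).exists
      -- sandwich
      have ht1l : t1 ∈ Set.Ioc 0 l := ⟨ht1mem.1, (ht1mem.2.le.trans ht.2).trans hxl⟩
      have htl : t ∈ Set.Ioc 0 l := ⟨ht.1, ht.2.trans hxl⟩
      have hxll : x ∈ Set.Ioc 0 l := ⟨hx0, hxl⟩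
      have hst1 : 0 < snK k t1 := snK_pos hk ht1l
      have hc_t1 : f t1 / snK k t1 = c0 := by rw [ht1eq]; field_simp
      have h1 : f t / snK k t ≤ c0 := by
        rw [← hc_t1]; exact hdec ht1l htl ht1mem.2.le
      have h2 : c0 ≤ f t / snK k t := hdec htl hxll ht.2
      have hst : 0 < snK k t := snK_pos hk htl
      have : f t / snK k t = c0 := le_antisymm h1 h2
      rw [← this]; field_simp
    -- identify c0 = 1 via the Dini derivative
    have htend : Filter.Tendsto (fun h => f h / h) (nhdsWithin 0 (Set.Ioi 0))
        (nhds c0) := by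
      have h1 : Filter.Tendsto (fun h => c0 * (snK k h / h))
          (nhdsWithin 0 (Set.Ioi 0)) (nhds c0) := by
        simpa using hslope.const_mul c0
      refine h1.congr' ?_
      filter_upwards [Ioc_mem_nhdsGT_of_mem ⟨le_refl 0, hx0⟩] with h hh
      rw [hall h hh, mul_div_assoc]
    have hc01 : c0 = 1 := by
      have : Filter.Tendsto (fun h : ℝ => ((f h / h : ℝ) : EReal))
          (nhdsWithin 0 (Set.Ioi 0)) (nhds (c0 : EReal)) :=
        EReal.tendsto_coe.2 htend
      have hlim := this.limsup_eq
      rw [hdini'] at hlim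
      exact EReal.coe_eq_one.1 hlim.symm
    have hallx : ∀ t ∈ Set.Ioc 0 x, f t = snK k t := by
      intro t ht; rw [hall t ht, hc01, one_mul]
    -- S x = S r, hence x = r
    have hSxr : S r = S x := by
      rw [hSr, hIs]
      apply MeasureTheory.setIntegral_congr_fun measurableSet_Ioc
      intro t ht
      simp only [hallx t ht]
    have hxr : x = r := (hSmono.injOn hr hx hSxr).symm
    subst hxr
    refine ⟨rfl, fun t ht => ?_⟩
    rcases eq_or_lt_of_le ht.1 with h0 | h0
    · rw [← h0, hf0, snK_zero]
    · exact hallx t ⟨h0, ht.2⟩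
end

section
/- Let k ∈ ℝ and a ∈ [0,1], and let t₁ ≤ t₂ with sn_k(t₁) = a·sn_k(t₂), where t₁, t₂ ∈ [0, π/(2√k)] if k > 0 and t₁, t₂ ≥ 0 otherwise. Then sn_k'(t₁) ≥ a·sn_k'(t₂). -/
open Filter Set MeasureTheory intervalIntegral

theorem snK'_ineq (k : ℝ) (a : ℝ) (ha : a ∈ Set.Icc (0:ℝ) 1)
    (t₁ t₂ : ℝ) (ht₁ : 0 ≤ t₁) (h12 : t₁ ≤ t₂)
    (hk : 0 < k → t₂ ≤ Real.pi / (2 * Real.sqrt k))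
    (heq : snK k t₁ = a * snK k t₂) :
    a * snK' k t₂ ≤ snK' k t₁ := by
  obtain ⟨ha0, ha1⟩ := ha
  rcases lt_trichotomy k 0 with hneg | hzero | hpos
  · -- k < 0
    have hknp : ¬ (0 < k) := not_lt.mpr hneg.le
    have hs : 0 < Real.sqrt (-k) := Real.sqrt_pos.mpr (by linarith)
    simp only [snK, snK', if_neg hknp, if_pos hneg] at heq ⊢
    have heq' : Real.sinh (Real.sqrt (-k) * t₁) = a * Real.sinh (Real.sqrt (-k) * t₂) := by
      rw [← mul_div_assoc, div_eq_div_iff hs.ne' hs.ne'] at heq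
      exact mul_right_cancel₀ hs.ne' heq
    have hsq : Real.sinh (Real.sqrt (-k) * t₁) ^ 2
        = a ^ 2 * Real.sinh (Real.sqrt (-k) * t₂) ^ 2 := by rw [heq']; ring
    have h1 := Real.cosh_sq (Real.sqrt (-k) * t₁)
    have h2 := Real.cosh_sq (Real.sqrt (-k) * t₂)
    have hc1 := Real.cosh_pos (x := Real.sqrt (-k) * t₁)
    have key : (a * Real.cosh (Real.sqrt (-k) * t₂)) ^ 2
        ≤ Real.cosh (Real.sqrt (-k) * t₁) ^ 2 := by nlinarith
    exact le_of_pow_le_pow_left₀ two_ne_zero hc1.le key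
  · -- k = 0
    subst hzero
    simp only [snK, snK', lt_irrefl, if_neg (lt_irrefl (0:ℝ)), if_false] at heq ⊢
    linarith
  · -- k > 0
    have hs : 0 < Real.sqrt k := Real.sqrt_pos.mpr hpos
    simp only [snK, snK', if_pos hpos] at heq ⊢
    have heq' : Real.sin (Real.sqrt k * t₁) = a * Real.sin (Real.sqrt k * t₂) := by
      rw [← mul_div_assoc, div_eq_div_iff hs.ne' hs.ne'] at heq
      exact mul_right_cancel₀ hs.ne' heq
    have hsq : Real.sin (Real.sqrt k * t₁) ^ 2
        = a ^ 2 * Real.sin (Real.sqrt k * t₂) ^ 2 := by rw [heq']; ring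
    have ht2 : Real.sqrt k * t₂ ≤ Real.pi / 2 := by
      calc Real.sqrt k * t₂ = t₂ * Real.sqrt k := mul_comm _ _
        _ ≤ Real.pi / (2 * Real.sqrt k) * Real.sqrt k :=
            mul_le_mul_of_nonneg_right (hk hpos) hs.le
        _ = Real.pi / 2 := by field_simp
    have ht1 : Real.sqrt k * t₁ ≤ Real.pi / 2 :=
      le_trans (by nlinarith) ht2
    have hc1 : 0 ≤ Real.cos (Real.sqrt k * t₁) :=
      Real.cos_nonneg_of_mem_Icc ⟨by nlinarith [Real.pi_pos], ht1⟩
    have h1 := Real.sin_sq_add_cos_sq (Real.sqrt k * t₁)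
    have h2 := Real.sin_sq_add_cos_sq (Real.sqrt k * t₂)
    have key : (a * Real.cos (Real.sqrt k * t₂)) ^ 2
        ≤ Real.cos (Real.sqrt k * t₁) ^ 2 := by nlinarith
    exact le_of_pow_le_pow_left₀ two_ne_zero hc1 key
end

section
/- Define f : [0,π] → ℝ by f(t) = (1/2)sin(2t) for t ∈ [0,π/2] and f(t) = cos t for t ∈ [π/2,π]. Then f is continuous, f(0)=0, f''(t) + f(t) ≤ 0 in the support sense for all t ∈ (0,π), but the function ψ(t) := f(t) − f'_+(0)·sin t = f(t) − 2 sin t is not decreasing on [0,π]. -/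
open Filter Set

/-- `f'' t ≤ B` in the support sense: there is `A` such that
`f (t + τ) ≤ f t + A τ + (B/2) τ² + o(τ²)`. -/
def SuppSecondDerivLE (f : ℝ → ℝ) (t B : ℝ) : Prop :=
  ∃ A : ℝ, ∀ ε > 0, ∀ᶠ τ in nhds (0:ℝ),
    f (t + τ) ≤ f t + A * τ + B / 2 * τ ^ 2 + ε * τ ^ 2

/-- The counterexample function: `(1/2) sin (2t)` on `[0, π/2]` and `cos t` on `[π/2, π]`. -/
noncomputable def counterF (t : ℝ) : ℝ :=
  if t ≤ Real.pi / 2 then Real.sin (2 * t) / 2 else Real.cos t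

lemma aux_sin_sub (x : ℝ) (hx : |x| ≤ 1) : |Real.sin x - x| ≤ |x| ^ 3 := by
  have h := Real.sin_bound hx
  have h4 : |x| ^ 4 ≤ |x| ^ 3 := by
    calc |x| ^ 4 = |x| ^ 3 * |x| := by ring
    _ ≤ |x| ^ 3 * 1 := by
        have : (0:ℝ) ≤ |x| ^ 3 := by positivity
        nlinarith
    _ = |x| ^ 3 := by ring
  have h3 : |x ^ 3 / 6| ≤ |x| ^ 3 / 6 := by
    rw [abs_div, abs_pow]; simp
  calc |Real.sin x - x| = |(Real.sin x - (x - x ^ 3 / 6)) + (- x ^ 3 / 6)| := by ring_nf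
    _ ≤ |Real.sin x - (x - x ^ 3 / 6)| + |(- x ^ 3 / 6)| := abs_add_le _ _
    _ ≤ |x| ^ 4 * (5/96) + |x| ^ 3 / 6 := by
        have : |(- x ^ 3 / 6)| = |x ^ 3 / 6| := by rw [abs_div, abs_div, abs_neg]
        rw [this]; nlinarith [pow_nonneg (abs_nonneg x) 4, mul_le_mul_of_nonneg_left hx (pow_nonneg (abs_nonneg x) 4)]
    _ ≤ |x| ^ 3 := by
        have h30 : (0:ℝ) ≤ |x| ^ 3 := by positivity
        nlinarith

lemma aux_cos_sub (x : ℝ) (hx : |x| ≤ 1) : |Real.cos x - (1 - x ^ 2 / 2)| ≤ |x| ^ 3 := by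
  have h := Real.cos_bound hx
  have h4 : |x| ^ 4 ≤ |x| ^ 3 := by
    calc |x| ^ 4 = |x| ^ 3 * |x| := by ring
    _ ≤ |x| ^ 3 * 1 := by
        have : (0:ℝ) ≤ |x| ^ 3 := by positivity
        nlinarith
    _ = |x| ^ 3 := by ring
  have h30 : (0:ℝ) ≤ |x| ^ 3 := by positivity
  nlinarith

lemma counterF_le_sin (u : ℝ) (_h0 : 0 ≤ u) (h1 : u ≤ Real.pi) :
    counterF u ≤ Real.sin (2 * u) / 2 := by
  unfold counterF
  split_ifs with h
  · exact le_refl _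
  · push_neg at h
    rw [Real.sin_two_mul]
    have hc : Real.cos u ≤ 0 := Real.cos_nonpos_of_pi_div_two_le_of_le h.le
      (by linarith [Real.pi_pos])
    have hs : Real.sin u ≤ 1 := Real.sin_le_one u
    nlinarith

lemma counterF_le_cos (u : ℝ) (h0 : 0 ≤ u) : counterF u ≤ Real.cos u := by
  unfold counterF
  split_ifs with h
  · rw [Real.sin_two_mul]
    have hc : 0 ≤ Real.cos u := Real.cos_nonneg_of_mem_Icc ⟨by linarith [Real.pi_pos], h⟩
    have hs : Real.sin u ≤ 1 := Real.sin_le_one u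
    nlinarith
  · exact le_refl _

lemma E1 (t τ ε : ℝ) (hS : 0 ≤ Real.sin (2 * t)) (hτ : |τ| ≤ 1/2) (hε : 8 * |τ| ≤ ε) :
    Real.sin (2 * (t + τ)) / 2 ≤
      Real.sin (2 * t) / 2 + Real.cos (2 * t) * τ +
        (-(Real.sin (2 * t) / 2)) / 2 * τ ^ 2 + ε * τ ^ 2 := by
  have h2τ : |2 * τ| ≤ 1 := by rw [abs_mul]; simp only [abs_two]; linarith
  have hs := aux_sin_sub (2 * τ) h2τ
  have hc := aux_cos_sub (2 * τ) h2τ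
  have habs : |2 * τ| ^ 3 = 8 * |τ| ^ 3 := by rw [abs_mul]; simp only [abs_two]; ring
  rw [habs] at hs hc
  rw [show 2 * (t + τ) = 2 * t + 2 * τ by ring, Real.sin_add]
  set S := Real.sin (2 * t) with hSdef
  set C := Real.cos (2 * t) with hCdef
  have hS1 : S ≤ 1 := Real.sin_le_one _
  have hC1 : |C| ≤ 1 := Real.abs_cos_le_one _
  have hc' := abs_le.mp hc
  have hs' := abs_le.mp hs
  have hC' := abs_le.mp hC1
  have hτ3 : |τ| ^ 3 = |τ| * τ ^ 2 := by rw [← sq_abs]; ring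
  have hτ0 : 0 ≤ |τ| := abs_nonneg τ
  have h3nn : (0:ℝ) ≤ |τ| ^ 3 := by positivity
  have hB : C * (Real.sin (2 * τ) - 2 * τ) ≤ 8 * |τ| ^ 3 := by
    calc C * (Real.sin (2 * τ) - 2 * τ) ≤ |C * (Real.sin (2 * τ) - 2 * τ)| := le_abs_self _
    _ = |C| * |Real.sin (2 * τ) - 2 * τ| := abs_mul _ _
    _ ≤ 1 * (8 * |τ| ^ 3) := mul_le_mul hC1 hs (abs_nonneg _) zero_le_one
    _ = 8 * |τ| ^ 3 := one_mul _
  have hA : S * (Real.cos (2 * τ) - (1 - (2 * τ) ^ 2 / 2)) ≤ S * (8 * |τ| ^ 3) :=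
    mul_le_mul_of_nonneg_left hc'.2 hS
  have hSb : S * |τ| ^ 3 ≤ |τ| ^ 3 := by nlinarith
  nlinarith [mul_nonneg hS (sq_nonneg τ),
    mul_nonneg (by linarith : (0:ℝ) ≤ ε - 8 * |τ|) (sq_nonneg τ)]

lemma E2 (t τ ε : ℝ) (hτ : |τ| ≤ 1) (hε : 2 * |τ| ≤ ε) :
    Real.cos (t + τ) ≤
      Real.cos t + (-Real.sin t) * τ + (-Real.cos t) / 2 * τ ^ 2 + ε * τ ^ 2 := by
  have hs := aux_sin_sub τ hτ
  have hc := aux_cos_sub τ hτ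
  rw [Real.cos_add]
  set S := Real.sin t
  set C := Real.cos t
  have hS1 : |S| ≤ 1 := Real.abs_sin_le_one _
  have hC1 : |C| ≤ 1 := Real.abs_cos_le_one _
  have hτ3 : |τ| ^ 3 = |τ| * τ ^ 2 := by rw [← sq_abs]; ring
  have hτ0 : 0 ≤ |τ| := abs_nonneg τ
  have h1 : C * (Real.cos τ - (1 - τ ^ 2 / 2)) ≤ |τ| ^ 3 := by
    calc C * (Real.cos τ - (1 - τ ^ 2 / 2)) ≤ |C * (Real.cos τ - (1 - τ ^ 2 / 2))| :=
        le_abs_self _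
    _ = |C| * |Real.cos τ - (1 - τ ^ 2 / 2)| := abs_mul _ _
    _ ≤ 1 * |τ| ^ 3 := mul_le_mul hC1 hc (abs_nonneg _) zero_le_one
    _ = |τ| ^ 3 := one_mul _
  have h2 : -(S * (Real.sin τ - τ)) ≤ |τ| ^ 3 := by
    calc -(S * (Real.sin τ - τ)) ≤ |S * (Real.sin τ - τ)| := by
          rw [← abs_neg]; exact le_abs_self _
    _ = |S| * |Real.sin τ - τ| := abs_mul _ _
    _ ≤ 1 * |τ| ^ 3 := mul_le_mul hS1 hs (abs_nonneg _) zero_le_one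
    _ = |τ| ^ 3 := one_mul _
  nlinarith [sq_nonneg τ, mul_nonneg hτ0 (sq_nonneg τ),
    mul_nonneg (by linarith : (0:ℝ) ≤ ε - 2 * |τ|) (sq_nonneg τ)]

theorem counterexample_psi_not_antitone :
    ContinuousOn counterF (Set.Icc 0 Real.pi) ∧
    counterF 0 = 0 ∧
    (∀ t ∈ Set.Ioo 0 Real.pi, SuppSecondDerivLE counterF t (-counterF t)) ∧
    ¬ AntitoneOn (fun t => counterF t - 2 * Real.sin t) (Set.Icc 0 Real.pi) := by
  have hpi := Real.pi_pos
  refine ⟨?_, ?_, ?_, ?_⟩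
  · -- continuity
    have : Continuous counterF := by
      apply Continuous.if_le
      · exact (Real.continuous_sin.comp (continuous_const.mul continuous_id)).div_const 2
      · exact Real.continuous_cos
      · exact continuous_id
      · exact continuous_const
      · intro x hx
        rw [hx]
        rw [show 2 * (Real.pi / 2) = Real.pi by ring, Real.sin_pi, Real.cos_pi_div_two]
        norm_num
    exact this.continuousOn
  · -- value at 0
    rw [counterF, if_pos (by positivity)]
    simp
  · -- support sense
    intro t ht
    obtain ⟨ht0, htπ⟩ := ht
    by_cases htle : t ≤ Real.pi / 2
    · -- left piece
      refine ⟨Real.cos (2 * t), fun ε hε => ?_⟩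
      have hft : counterF t = Real.sin (2 * t) / 2 := if_pos htle
      have hS : 0 ≤ Real.sin (2 * t) :=
        Real.sin_nonneg_of_nonneg_of_le_pi (by linarith) (by linarith)
      set δ := min (min t (Real.pi - t)) (min (1/2) (ε/8)) with hδdef
      have hδ : 0 < δ := by
        apply lt_min (lt_min ht0 (by linarith)) (lt_min (by norm_num) (by linarith))
      filter_upwards [Metric.ball_mem_nhds (0:ℝ) hδ] with τ hτ
      rw [Metric.mem_ball, Real.dist_eq, sub_zero] at hτ
      have h1 : |τ| < t := lt_of_lt_of_le hτ ((min_le_left _ _).trans (min_le_left _ _))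
      have h2 : |τ| < Real.pi - t := lt_of_lt_of_le hτ ((min_le_left _ _).trans (min_le_right _ _))
      have h3 : |τ| ≤ 1/2 := le_of_lt (lt_of_lt_of_le hτ ((min_le_right _ _).trans (min_le_left _ _)))
      have h4 : 8 * |τ| ≤ ε := by
        have := lt_of_lt_of_le hτ ((min_le_right _ _).trans (min_le_right _ _))
        linarith
      have hb := abs_lt.mp h1
      have hb2 := abs_lt.mp h2
      have hle : counterF (t + τ) ≤ Real.sin (2 * (t + τ)) / 2 :=
        counterF_le_sin _ (by linarith) (by linarith)
      rw [hft]
      calc counterF (t + τ) ≤ Real.sin (2 * (t + τ)) / 2 := hle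
        _ ≤ Real.sin (2 * t) / 2 + Real.cos (2 * t) * τ +
            (-(Real.sin (2 * t) / 2)) / 2 * τ ^ 2 + ε * τ ^ 2 := E1 t τ ε hS h3 h4
    · -- right piece
      push_neg at htle
      refine ⟨-Real.sin t, fun ε hε => ?_⟩
      have hft : counterF t = Real.cos t := if_neg (not_le.mpr htle)
      set δ := min (min t (Real.pi - t)) (min 1 (ε/2)) with hδdef
      have hδ : 0 < δ := by
        apply lt_min (lt_min ht0 (by linarith)) (lt_min (by norm_num) (by linarith))
      filter_upwards [Metric.ball_mem_nhds (0:ℝ) hδ] with τ hτ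
      rw [Metric.mem_ball, Real.dist_eq, sub_zero] at hτ
      have h1 : |τ| < t := lt_of_lt_of_le hτ ((min_le_left _ _).trans (min_le_left _ _))
      have h3 : |τ| ≤ 1 := le_of_lt (lt_of_lt_of_le hτ ((min_le_right _ _).trans (min_le_left _ _)))
      have h4 : 2 * |τ| ≤ ε := by
        have := lt_of_lt_of_le hτ ((min_le_right _ _).trans (min_le_right _ _))
        linarith
      have hb := abs_lt.mp h1
      have hle : counterF (t + τ) ≤ Real.cos (t + τ) := counterF_le_cos _ (by linarith)
      rw [hft]
      calc counterF (t + τ) ≤ Real.cos (t + τ) := hle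
        _ ≤ Real.cos t + (-Real.sin t) * τ + (-Real.cos t) / 2 * τ ^ 2 + ε * τ ^ 2 :=
          E2 t τ ε h3 h4
  · -- not antitone
    intro h
    have hmem1 : Real.pi / 2 ∈ Set.Icc 0 Real.pi := ⟨by linarith, by linarith⟩
    have hmem2 : Real.pi ∈ Set.Icc 0 Real.pi := ⟨by linarith, le_refl _⟩
    have := h hmem1 hmem2 (by linarith)
    simp only [counterF] at this
    rw [if_pos (le_refl _), if_neg (by linarith : ¬ Real.pi ≤ Real.pi / 2)] at this
    rw [show 2 * (Real.pi / 2) = Real.pi by ring] at this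
    simp [Real.sin_pi, Real.cos_pi, Real.sin_pi_div_two] at this
end

section
/- Let f : [0,l] → ℝ be continuous with f(0)=0 and f''(t)+k·f(t) ≤ 0 in the support sense on (0,l), where l < π/√k if k > 0. If f(l) = 0, then f(t) ≥ 0 for all t ∈ [0,l]. -/
open Filter Set MeasureTheory intervalIntegral

lemma cos_taylor_upper (θ s : ℝ) (hθ : 0 ≤ Real.cos θ) {ε : ℝ} (hε : 0 < ε) :
    ∀ᶠ τ : ℝ in nhds 0, Real.cos (θ + s * τ) ≤
      Real.cos θ + (-Real.sin θ * s) * τ + (-(s ^ 2) * Real.cos θ) / 2 * τ ^ 2 + ε * τ ^ 2 := by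
  have hs1 : (0:ℝ) < |s| + 1 := by positivity
  rw [Metric.eventually_nhds_iff]
  refine ⟨min ((|s| + 1)⁻¹) (ε / (|s| + 1) ^ 3), by positivity, fun τ hτ => ?_⟩
  rw [Real.dist_eq, sub_zero] at hτ
  have hτ1 : |τ| ≤ (|s| + 1)⁻¹ := (lt_min_iff.mp hτ).1.le
  have hτ2 : |τ| ≤ ε / (|s| + 1) ^ 3 := (lt_min_iff.mp hτ).2.le
  set u := s * τ with hu
  have hu1 : |u| ≤ 1 := by
    rw [hu, abs_mul]
    calc |s| * |τ| ≤ (|s| + 1) * (|s| + 1)⁻¹ := by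
          apply mul_le_mul (by linarith) hτ1 (abs_nonneg _) (by linarith)
      _ = 1 := mul_inv_cancel₀ hs1.ne'
  have hu3 : |u| ^ 3 ≤ ε * τ ^ 2 := by
    have h1 : |u| ^ 3 = (|s| ^ 3 * |τ|) * τ ^ 2 := by
      rw [hu, abs_mul, mul_pow]
      rw [show |τ| ^ 3 = |τ| * |τ| ^ 2 by ring, sq_abs]
      ring
    rw [h1]
    have h2 : |s| ^ 3 * |τ| ≤ ε := by
      calc |s| ^ 3 * |τ| ≤ (|s| + 1) ^ 3 * (ε / (|s| + 1) ^ 3) := by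
            apply mul_le_mul _ hτ2 (abs_nonneg _) (by positivity)
            gcongr; linarith [abs_nonneg s]
        _ = ε := by field_simp
    exact mul_le_mul_of_nonneg_right h2 (sq_nonneg _)
  have hcb := Real.cos_bound hu1
  have hsb := Real.sin_bound hu1
  have hu4 : |u| ^ 4 ≤ |u| ^ 3 := pow_le_pow_of_le_one (abs_nonneg _) hu1 (by norm_num)
  have hc1 : Real.cos θ ≤ 1 := Real.cos_le_one θ
  have hsin : |Real.sin θ| ≤ 1 := abs_le.mpr ⟨Real.neg_one_le_sin θ, Real.sin_le_one θ⟩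
  have hcA := abs_le.mp hcb
  have hsA := abs_le.mp hsb
  have hcu3 : |u ^ 3| = |u| ^ 3 := abs_pow u 3
  have hle : u ≤ |u| := le_abs_self u
  have hle' : -|u| ≤ u := neg_abs_le u
  -- step 1: cosθ * cos u ≤ cosθ * (1 - u^2/2) + (5/96) * |u|^3
  have step1 : Real.cos θ * Real.cos u ≤ Real.cos θ * (1 - u ^ 2 / 2) + 5 / 96 * |u| ^ 3 := by
    have h5 : Real.cos u ≤ 1 - u ^ 2 / 2 + |u| ^ 4 * (5 / 96) := by linarith [hcA.2]
    nlinarith [mul_le_mul_of_nonneg_left h5 hθ, abs_nonneg u, pow_nonneg (abs_nonneg u) 4]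
  -- step 2: -sinθ * sin u ≤ -sinθ * u + (21/96) * |u|^3
  have step2 : -Real.sin θ * Real.sin u ≤ -Real.sin θ * u + 21 / 96 * |u| ^ 3 := by
    have he2 : |Real.sin u - u| ≤ |u| ^ 3 / 6 + |u| ^ 4 * (5 / 96) := by
      have := abs_sub_abs_le_abs_sub (Real.sin u - u) (u ^ 3 / 6)
      calc |Real.sin u - u| = |(Real.sin u - (u - u ^ 3 / 6)) + (-(u ^ 3) / 6)| := by ring_nf
        _ ≤ |Real.sin u - (u - u ^ 3 / 6)| + |(-(u ^ 3) / 6)| := abs_add_le _ _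
        _ ≤ |u| ^ 4 * (5 / 96) + |u| ^ 3 / 6 := by
            gcongr
            · have h5 : |u| ^ 5 ≤ |u| ^ 4 := pow_le_pow_of_le_one (abs_nonneg _) hu1 (by norm_num)
              linarith [hsb]
            · rw [abs_div, abs_neg, hcu3]; simp
        _ = |u| ^ 3 / 6 + |u| ^ 4 * (5 / 96) := by ring
    have h6 : -Real.sin θ * (Real.sin u - u) ≤ |Real.sin u - u| := by
      calc -Real.sin θ * (Real.sin u - u) ≤ |(-Real.sin θ) * (Real.sin u - u)| := le_abs_self _
        _ = |Real.sin θ| * |Real.sin u - u| := by rw [abs_mul, abs_neg]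
        _ ≤ 1 * |Real.sin u - u| := by gcongr
        _ = |Real.sin u - u| := one_mul _
    nlinarith
  -- combine
  have key : Real.cos (θ + u) ≤ Real.cos θ - Real.sin θ * u - Real.cos θ * u ^ 2 / 2 + |u| ^ 3 := by
    rw [Real.cos_add]
    nlinarith [step1, step2]
  calc Real.cos (θ + s * τ) ≤ Real.cos θ - Real.sin θ * u - Real.cos θ * u ^ 2 / 2 + |u| ^ 3 := key
    _ ≤ Real.cos θ - Real.sin θ * u - Real.cos θ * u ^ 2 / 2 + ε * τ ^ 2 := by linarith
    _ = Real.cos θ + (-Real.sin θ * s) * τ + (-(s ^ 2) * Real.cos θ) / 2 * τ ^ 2 + ε * τ ^ 2 := by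
        rw [hu]; ring

set_option maxHeartbeats 1600000 in
theorem nonneg_of_support_and_endpoints (k l : ℝ) (f : ℝ → ℝ)
    (hk : 0 < k → l < Real.pi / Real.sqrt k)
    (hcont : ContinuousOn f (Set.Icc 0 l))
    (hf0 : f 0 = 0) (hfl : f l = 0)
    (hsupp : ∀ t ∈ Set.Ioo 0 l, SuppSecondDerivLE f t (-(k * f t))) :
    ∀ t ∈ Set.Icc 0 l, 0 ≤ f t := by
  rcases le_or_gt l 0 with hl | hl
  · intro t ht
    have : t = 0 := le_antisymm (ht.2.trans hl) ht.1
    rw [this, hf0]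
  -- main case : 0 < l
  have hπ : 0 < Real.pi := Real.pi_pos
  have hπl : 0 < Real.pi / l := by positivity
  have hkP : max k 0 < (Real.pi / l) ^ 2 := by
    rcases le_or_gt k 0 with hk0 | hk0
    · rw [max_eq_right hk0]; positivity
    · rw [max_eq_left hk0.le]
      have hsk : 0 < Real.sqrt k := Real.sqrt_pos.mpr hk0
      have h1 := hk hk0
      rw [lt_div_iff₀ hsk] at h1
      have h2 : Real.sqrt k < Real.pi / l := by
        rw [lt_div_iff₀ hl]; nlinarith
      calc k = Real.sqrt k ^ 2 := (Real.sq_sqrt hk0.le).symm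
        _ < (Real.pi / l) ^ 2 := by gcongr
  set c : ℝ := (max k 0 + (Real.pi / l) ^ 2) / 2 with hc
  have hc0 : 0 < c := by
    have h1 : (0:ℝ) ≤ max k 0 := le_max_right _ _
    have h2 : (0:ℝ) < (Real.pi / l) ^ 2 := by positivity
    simp only [hc]; linarith
  have hkc : k < c := by
    have : k ≤ max k 0 := le_max_left _ _
    simp only [hc]; linarith
  have hcπ : c < (Real.pi / l) ^ 2 := by simp only [hc]; linarith
  set s : ℝ := Real.sqrt c with hsdef
  have hs0 : 0 < s := Real.sqrt_pos.mpr hc0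
  have hs2 : s ^ 2 = c := Real.sq_sqrt hc0.le
  have hsl : s < Real.pi / l := by nlinarith
  have hslπ : s * l < Real.pi := by rw [← lt_div_iff₀ hl]; exact hsl
  set g : ℝ → ℝ := fun x => Real.cos (s * (x - l / 2)) with hg
  have hgpos : ∀ x ∈ Set.Icc 0 l, 0 < g x := by
    intro x hx
    apply Real.cos_pos_of_mem_Ioo
    have hb1 : s * (-(l / 2)) ≤ s * (x - l / 2) :=
      mul_le_mul_of_nonneg_left (by linarith [hx.1]) hs0.le
    have hb2 : s * (x - l / 2) ≤ s * (l / 2) :=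
      mul_le_mul_of_nonneg_left (by linarith [hx.2]) hs0.le
    constructor
    · nlinarith
    · nlinarith
  have hgc : Continuous g := by
    apply Real.continuous_cos.comp; continuity
  by_contra hcon
  push_neg at hcon
  obtain ⟨t₁, ht₁, hft₁⟩ := hcon
  set q : ℝ → ℝ := fun x => f x / g x with hq
  have hqc : ContinuousOn q (Set.Icc 0 l) :=
    hcont.div hgc.continuousOn (fun x hx => (hgpos x hx).ne')
  obtain ⟨t₀, ht₀, hmin⟩ := isCompact_Icc.exists_isMinOn ⟨0, left_mem_Icc.mpr hl.le⟩ hqc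
  have hqt₀ : q t₀ < 0 := by
    have h1 : q t₁ < 0 := div_neg_of_neg_of_pos hft₁ (hgpos t₁ ht₁)
    exact lt_of_le_of_lt (hmin ht₁) h1
  have hq0 : q 0 = 0 := by simp only [hq, hf0, zero_div]
  have hql : q l = 0 := by simp only [hq, hfl, zero_div]
  have ht₀I : t₀ ∈ Set.Ioo 0 l := by
    constructor
    · rcases eq_or_lt_of_le ht₀.1 with h | h
      · exfalso; rw [← h] at hqt₀; linarith
      · exact h
    · rcases eq_or_lt_of_le ht₀.2 with h | h
      · exfalso; rw [h] at hqt₀; linarith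
      · exact h
  set m : ℝ := -q t₀ with hm
  have hm0 : 0 < m := by simp only [hm]; linarith
  have hgt₀ : 0 < g t₀ := hgpos t₀ ht₀
  have hft₀ : f t₀ = -m * g t₀ := by
    simp only [hm, hq, neg_neg]
    rw [div_mul_cancel₀ _ hgt₀.ne']
  have hFpos : ∀ x ∈ Set.Icc 0 l, 0 ≤ f x + m * g x := by
    intro x hx
    have h1 : q t₀ ≤ q x := hmin hx
    have h2 : -m ≤ f x / g x := by simp only [hm, neg_neg] at *; linarith
    have h3 : -m * g x ≤ f x := by
      rw [← le_div_iff₀ (hgpos x hx)]; exact h2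
    linarith
  obtain ⟨A, hA⟩ := hsupp t₀ ht₀I
  set θ : ℝ := s * (t₀ - l / 2) with hθdef
  have hθc : 0 ≤ Real.cos θ := hgt₀.le
  have hBneg : m * g t₀ * (k - c) < 0 :=
    mul_neg_of_pos_of_neg (by positivity) (by linarith)
  have hε0 : 0 < m * g t₀ * (c - k) / 8 := by nlinarith
  have h1 := hA (m * g t₀ * (c - k) / 8) hε0
  have h2 := cos_taylor_upper θ s hθc (show 0 < g t₀ * (c - k) / 8 by
    apply div_pos (mul_pos hgt₀ (by linarith)) (by norm_num))
  have h3 : ∀ᶠ τ : ℝ in nhds 0, t₀ + τ ∈ Set.Ioo 0 l := by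
    have ht : Filter.Tendsto (fun τ : ℝ => t₀ + τ) (nhds 0) (nhds t₀) :=
      (continuous_add_left t₀).tendsto' 0 t₀ (add_zero t₀)
    exact ht.eventually (isOpen_Ioo.eventually_mem ht₀I)
  have key : ∀ᶠ τ : ℝ in nhds 0, 0 ≤ (A + m * (-Real.sin θ * s)) * τ
      + (m * g t₀ * (k - c) / 4) * τ ^ 2 := by
    have hgτA : ∀ τ : ℝ, g (t₀ + τ) = Real.cos (θ + s * τ) := by
      intro τ; simp only [hg, hθdef]; ring_nf
    have hgθ : Real.cos θ = g t₀ := by simp only [hg, hθdef]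
    clear_value c s g q m θ
    filter_upwards [h1, h2, h3] with τ hτ1 hτ2 hτ3
    have hF : 0 ≤ f (t₀ + τ) + m * g (t₀ + τ) := hFpos _ (Set.Ioo_subset_Icc_self hτ3)
    rw [hgτA τ] at hF
    have hτ2' := mul_le_mul_of_nonneg_left hτ2 hm0.le
    rw [hgθ, hs2] at hτ2'
    rw [hft₀] at hτ1
    linarith [hτ1, hτ2', hF]
  rw [Metric.eventually_nhds_iff] at key
  obtain ⟨δ, hδ, hkey⟩ := key
  have e1 : 0 ≤ (A + m * (-Real.sin θ * s)) * (δ / 2)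
      + (m * g t₀ * (k - c) / 4) * (δ / 2) ^ 2 := by
    apply hkey; rw [Real.dist_eq, sub_zero, abs_of_pos (by linarith)]; linarith
  have e2 : 0 ≤ (A + m * (-Real.sin θ * s)) * (-(δ / 2))
      + (m * g t₀ * (k - c) / 4) * (-(δ / 2)) ^ 2 := by
    apply hkey; rw [Real.dist_eq, sub_zero, abs_of_neg (by linarith)]; linarith
  nlinarith [e1, e2, hBneg, mul_pos hδ hδ]
end

section
/- Let k > 0 and let f : [0,l] → ℝ be continuous with f(0)=0 and f''(t)+k·f(t) ≤ 0 in the support sense on (0,l). Suppose f(t₀) = 0 for some t₀ < π/√k with t₀ ≤ l. Then either f ≡ 0 on [0,t₀], or f > 0 on (0,t₀) and the maximum of f on [0,t₀] is attained at some t̄ ≤ π/(2√k); moreover if t̄ = π/(2√k) then f(t) = f'_+(0)·sn_k(t) on [0,t̄]. -/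
open Filter Set MeasureTheory intervalIntegral

lemma coeff_nonneg (A B : ℝ)
    (h : ∀ ε > 0, ∀ᶠ τ in nhds (0:ℝ), 0 ≤ A * τ + (B / 2 + ε) * τ ^ 2) : 0 ≤ B := by
  have hA : A = 0 := by
    have h1 := h 1 one_pos
    have hpos : 0 ≤ A := by
      have hev : ∀ᶠ τ in nhdsWithin (0:ℝ) (Set.Ioi 0), 0 ≤ A + (B/2 + 1) * τ := by
        filter_upwards [nhdsWithin_le_nhds h1, self_mem_nhdsWithin] with τ hτ (hτ0 : τ ∈ Set.Ioi 0)
        have hτ0' : 0 < τ := hτ0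
        nlinarith
      have ht : Tendsto (fun τ : ℝ => A + (B/2 + 1) * τ) (nhdsWithin 0 (Set.Ioi 0)) (nhds A) := by
        have : Tendsto (fun τ : ℝ => A + (B/2 + 1) * τ) (nhds 0) (nhds (A + (B/2+1) * 0)) := by
          exact (continuous_const.add (continuous_const.mul continuous_id)).tendsto 0
        simpa using this.mono_left nhdsWithin_le_nhds
      exact ge_of_tendsto ht hev
    have hneg : A ≤ 0 := by
      have hev : ∀ᶠ τ in nhdsWithin (0:ℝ) (Set.Iio 0), A + (B/2 + 1) * τ ≤ 0 := by
        filter_upwards [nhdsWithin_le_nhds h1, self_mem_nhdsWithin] with τ hτ (hτ0 : τ ∈ Set.Iio 0)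
        have hτ0' : τ < 0 := hτ0
        nlinarith
      have ht : Tendsto (fun τ : ℝ => A + (B/2 + 1) * τ) (nhdsWithin 0 (Set.Iio 0)) (nhds A) := by
        have : Tendsto (fun τ : ℝ => A + (B/2 + 1) * τ) (nhds 0) (nhds (A + (B/2+1) * 0)) := by
          exact (continuous_const.add (continuous_const.mul continuous_id)).tendsto 0
        simpa using this.mono_left nhdsWithin_le_nhds
      exact le_of_tendsto ht hev
    linarith
  by_contra hB
  push_neg at hB
  have hε : (0:ℝ) < -B/4 := by linarith
  have h2 := h (-B/4) hε
  have h3 : ∀ᶠ τ in nhdsWithin (0:ℝ) (Set.Ioi 0), (0:ℝ) ≤ (B/2 + -B/4) * τ ^ 2 := by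
    filter_upwards [nhdsWithin_le_nhds h2, self_mem_nhdsWithin] with τ hτ _
    rw [hA] at hτ; linarith
  obtain ⟨τ, hτ, (hτ0 : τ ∈ Set.Ioi 0)⟩ := (h3.and self_mem_nhdsWithin).exists
  have hτp : (0:ℝ) < τ := hτ0
  nlinarith [sq_nonneg τ, mul_pos hτp hτp]

lemma taylor2 (ψ ψd : ℝ → ℝ) (t c2 : ℝ)
    (hψ : ∀ x, HasDerivAt ψ (ψd x) x) (hψd : HasDerivAt ψd c2 t)
    (ε : ℝ) (hε : 0 < ε) :
    ∀ᶠ τ in nhds (0:ℝ), |ψ (t + τ) - (ψ t + ψd t * τ + c2 / 2 * τ ^ 2)| ≤ ε * τ ^ 2 := by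
  set R : ℝ → ℝ := fun τ => ψ (t + τ) - (ψ t + ψd t * τ + c2 / 2 * τ ^ 2) with hR
  set Rd : ℝ → ℝ := fun τ => ψd (t + τ) - (ψd t + c2 * τ) with hRd
  have hRderiv : ∀ τ, HasDerivAt R (Rd τ) τ := by
    intro τ
    have h1 : HasDerivAt (fun τ : ℝ => ψ (t + τ)) (ψd (t + τ)) τ := by
      simpa [Function.comp_def] using (HasDerivAt.comp τ (hψ (t + τ)) ((hasDerivAt_id τ).const_add t))
    have h2 : HasDerivAt (fun τ : ℝ => ψ t + ψd t * τ + c2 / 2 * τ ^ 2)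
        (ψd t + c2 * τ) τ := by
      have hp : HasDerivAt (fun τ : ℝ => τ ^ 2) (2 * τ) τ := by
        simpa using hasDerivAt_pow 2 τ
      have : HasDerivAt (fun τ : ℝ => ψ t + ψd t * τ + c2 / 2 * τ ^ 2)
          (0 + ψd t * 1 + c2 / 2 * (2 * τ)) τ :=
        (((hasDerivAt_const τ (ψ t)).add ((hasDerivAt_id τ).const_mul (ψd t))).add
          (hp.const_mul (c2/2)))
      convert this using 1; ring
    exact h1.sub h2
  -- from hψd : |ψd (t+τ) - ψd t - c2 τ| ≤ ε |τ| eventually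
  have hlito := (hasDerivAt_iff_isLittleO.mp hψd).def hε
  have hsh : Tendsto (fun τ : ℝ => t + τ) (nhds 0) (nhds t) := by
    simpa using (tendsto_const_nhds.add tendsto_id : Tendsto (fun τ : ℝ => t + τ) (nhds 0) (nhds (t+0)))
  have hev : ∀ᶠ τ in nhds (0:ℝ), |Rd τ| ≤ ε * |τ| := by
    filter_upwards [hsh.eventually hlito] with τ hτ
    have : |ψd (t + τ) - ψd t - c2 * τ| ≤ ε * |τ| := by
      simpa [Real.norm_eq_abs, abs_mul, mul_comm, add_sub_cancel_left] using hτ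
    simpa [hRd, sub_add_eq_sub_sub] using this
  rw [Metric.eventually_nhds_iff] at hev ⊢
  obtain ⟨δ, hδ, hball⟩ := hev
  refine ⟨δ, hδ, fun {τ} hτd => ?_⟩
  have hτd' : |τ| < δ := by simpa [Real.dist_eq] using hτd
  have key : ‖R τ - R 0‖ ≤ (ε * |τ|) * ‖τ - 0‖ := by
    apply Convex.norm_image_sub_le_of_norm_hasDerivWithin_le
      (f := R) (f' := Rd) (s := Set.uIcc 0 τ)
      (fun x _ => (hRderiv x).hasDerivWithinAt)
      ?_ (convex_uIcc 0 τ) (Set.left_mem_uIcc) (Set.right_mem_uIcc)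
    intro x hx
    have hxle : |x| ≤ |τ| := by
      rw [Set.uIcc_eq_union] at hx
      rcases hx with hx | hx <;> rw [abs_le] <;> constructor <;>
        simp at hx <;> first | linarith [hx.1, hx.2, abs_nonneg τ, le_abs_self τ, neg_abs_le τ] | skip
    have hxδ : dist x 0 < δ := by
      simpa [Real.dist_eq] using lt_of_le_of_lt hxle hτd'
    calc ‖Rd x‖ ≤ ε * |x| := by simpa [Real.norm_eq_abs] using hball hxδ
      _ ≤ ε * |τ| := by nlinarith [hε.le]
  have hR0 : R 0 = 0 := by simp [hR]
  have : |R τ| ≤ ε * |τ| * |τ| := by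
    simpa [hR0, Real.norm_eq_abs] using key
  calc |ψ (t + τ) - (ψ t + ψd t * τ + c2 / 2 * τ ^ 2)| = |R τ| := rfl
    _ ≤ ε * |τ| * |τ| := this
    _ = ε * τ ^ 2 := by rw [mul_assoc, ← abs_mul, ← sq, abs_sq]

lemma comparison (k : ℝ) (hk : 0 < k) (a b : ℝ) (hab : a < b)
    (hlen : Real.sqrt k * (b - a) < Real.pi)
    (f : ℝ → ℝ) (hcont : ContinuousOn f (Set.Icc a b))
    (hsupp : ∀ t ∈ Set.Ioo a b, SuppSecondDerivLE f t (-(k * f t)))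
    (φ φd : ℝ → ℝ)
    (hφ : ∀ x, HasDerivAt φ (φd x) x)
    (hφd : ∀ x, HasDerivAt φd (-(k * φ x)) x)
    (hfa : φ a ≤ f a) (hfb : φ b ≤ f b) :
    ∀ t ∈ Set.Icc a b, φ t ≤ f t := by
  by_contra hcon
  push_neg at hcon
  obtain ⟨t₁, ht₁, hlt⟩ := hcon
  have hπ := Real.pi_pos
  have hsk : 0 < Real.sqrt k := Real.sqrt_pos.mpr hk
  set L : ℝ := b - a with hL
  have hL0 : 0 < L := by simp [hL]; linarith
  set e0 : ℝ := Real.pi - Real.sqrt k * L with he0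
  have he0p : 0 < e0 := by simp [he0]; linarith
  set s : ℝ := e0 * L / (2 * Real.pi) with hs
  have hsp : 0 < s := by positivity
  set r : ℝ := Real.pi / (L + 2 * s) with hr
  have hrp : 0 < r := by positivity
  have hrls : r * (L + s) < Real.pi := by
    rw [hr, div_mul_eq_mul_div, div_lt_iff₀ (by linarith)]
    nlinarith
  have hu : 2 * Real.pi * s = e0 * L := by rw [hs]; field_simp
  have hkey2 : Real.pi * (Real.pi - Real.sqrt k * (L + 2 * s)) = e0 ^ 2 := by
    rw [he0]; linear_combination (-(Real.sqrt k)) * hu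
  have hrk : Real.sqrt k < r := by
    rw [hr, lt_div_iff₀ (by linarith)]
    nlinarith [hkey2, he0p, hπ, sq_nonneg e0]
  set a0 : ℝ := a - s with ha0
  set σ : ℝ → ℝ := fun t => Real.sin (r * (t - a0)) with hσ
  set σd : ℝ → ℝ := fun t => r * Real.cos (r * (t - a0)) with hσd
  have hσderiv : ∀ x, HasDerivAt σ (σd x) x := by
    intro x
    have h1 : HasDerivAt (fun t : ℝ => r * (t - a0)) r x := by
      simpa using ((hasDerivAt_id x).sub_const a0).const_mul r
    simpa [hσ, hσd, mul_comm, Function.comp_def] using (Real.hasDerivAt_sin (r * (x - a0))).comp x h1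
  have hσdderiv : ∀ x, HasDerivAt σd (-(r ^ 2 * σ x)) x := by
    intro x
    have h1 : HasDerivAt (fun t : ℝ => r * (t - a0)) r x := by
      simpa using ((hasDerivAt_id x).sub_const a0).const_mul r
    have h2 := ((Real.hasDerivAt_cos (r * (x - a0))).comp x h1).const_mul r
    simpa [hσ, hσd, ← mul_assoc, pow_two] using h2.congr_deriv (by ring)
  have hσpos : ∀ t ∈ Set.Icc a b, 0 < σ t := by
    intro t ht
    have ht1 := ht.1
    have ht2 := ht.2
    have h1 : 0 < r * (t - a0) := by
      have hss : s ≤ t - a0 := by rw [ha0]; linarith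
      nlinarith
    have h2 : r * (t - a0) < Real.pi := by
      have h3 : t - a0 ≤ L + s := by rw [ha0, hL]; linarith
      nlinarith [mul_le_mul_of_nonneg_left h3 hrp.le]
    exact Real.sin_pos_of_pos_of_lt_pi h1 h2
  have hσcont : ContinuousOn σ (Set.Icc a b) :=
    fun x _ => ((hσderiv x).continuousAt).continuousWithinAt
  clear_value L e0 s r a0 σ σd
  set g : ℝ → ℝ := fun t => (f t - φ t) / σ t with hg
  have hφcont : ContinuousOn φ (Set.Icc a b) :=
    fun x _ => ((hφ x).continuousAt).continuousWithinAt
  have hgcont : ContinuousOn g (Set.Icc a b) :=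
    (hcont.sub hφcont).div hσcont (fun x hx => (hσpos x hx).ne')
  obtain ⟨ts, hts, htsmin⟩ :=
    isCompact_Icc.exists_isMinOn (Set.nonempty_Icc.mpr hab.le) hgcont
  set c : ℝ := g ts with hc
  have hcneg : c < 0 := by
    have h1 : g t₁ < 0 := div_neg_of_neg_of_pos (by linarith) (hσpos t₁ ht₁)
    exact lt_of_le_of_lt (htsmin ht₁) h1
  have hkey : ∀ t ∈ Set.Icc a b, φ t + c * σ t ≤ f t := by
    intro t ht
    have h1 : c ≤ g t := htsmin ht
    have h2 := hσpos t ht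
    rw [hg] at h1
    simp only at h1
    rw [le_div_iff₀ h2] at h1
    linarith
  have htsIoo : ts ∈ Set.Ioo a b := by
    rcases lt_or_eq_of_le hts.1 with h | h
    · rcases lt_or_eq_of_le hts.2 with h' | h'
      · exact ⟨h, h'⟩
      · exfalso
        have : 0 ≤ g ts := by
          rw [hg]; simp only [h']
          exact div_nonneg (by linarith) (hσpos b (Set.right_mem_Icc.mpr hab.le)).le
        linarith [hc ▸ this]
    · exfalso
      have : 0 ≤ g ts := by
        rw [hg]; simp only [← h]
        exact div_nonneg (by linarith) (hσpos a (Set.left_mem_Icc.mpr hab.le)).le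
      linarith [hc ▸ this]
  have htouch : f ts = φ ts + c * σ ts := by
    have h0 : (f ts - φ ts) / σ ts = c := hc.symm
    rw [div_eq_iff (hσpos ts hts).ne'] at h0
    linarith
  obtain ⟨A, hA⟩ := hsupp ts htsIoo
  clear_value g c
  set ψ : ℝ → ℝ := fun t => φ t + c * σ t with hψ
  set ψd : ℝ → ℝ := fun t => φd t + c * σd t with hψd
  have hψderiv : ∀ x, HasDerivAt ψ (ψd x) x :=
    fun x => (hφ x).add ((hσderiv x).const_mul c)
  have hψdderiv' : HasDerivAt ψd (-(k * φ ts) + c * -(r ^ 2 * σ ts)) ts :=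
    (hφd ts).add ((hσdderiv ts).const_mul c)
  set c2 : ℝ := -(k * φ ts) + c * -(r ^ 2 * σ ts) with hc2
  have hψdderiv : HasDerivAt ψd c2 ts := hψdderiv'
  clear_value ψ ψd c2
  have hBnn : 0 ≤ -(k * f ts) - c2 := by
    apply coeff_nonneg (A - ψd ts)
    intro ε hε
    have hev1 := hA (ε/2) (by linarith)
    have hev2 := taylor2 ψ ψd ts c2 hψderiv hψdderiv (ε/2) (by linarith)
    have hev3 : ∀ᶠ τ in nhds (0:ℝ), ts + τ ∈ Set.Icc a b := by
      have hten : Tendsto (fun τ : ℝ => ts + τ) (nhds 0) (nhds ts) := by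
        simpa using (tendsto_const_nhds.add tendsto_id :
          Tendsto (fun τ : ℝ => ts + τ) (nhds 0) (nhds (ts + 0)))
      exact hten.eventually (Filter.eventually_of_mem (Ioo_mem_nhds htsIoo.1 htsIoo.2)
        (fun x hx => Set.Ioo_subset_Icc_self hx))
    filter_upwards [hev1, hev2, hev3] with τ h1 h2 h3
    have h4 : ψ (ts + τ) ≤ f (ts + τ) := by rw [hψ]; exact hkey (ts + τ) h3
    have h5 : ψ ts + ψd ts * τ + c2 / 2 * τ ^ 2 - ε/2 * τ ^ 2 ≤ ψ (ts + τ) := by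
      have := (abs_le.mp h2).1; linarith
    have h6 : f ts = ψ ts := by rw [hψ]; exact htouch
    have h7 : (A - ψd ts) * τ + ((-(k * f ts) - c2) / 2 + ε) * τ ^ 2 =
        (f ts + A * τ + (-(k * f ts)) / 2 * τ ^ 2 + ε/2 * τ ^ 2) -
          (ψ ts + ψd ts * τ + c2 / 2 * τ ^ 2 - ε/2 * τ ^ 2) - (f ts - ψ ts) := by ring
    rw [h7]
    linarith only [h1, h4, h5, h6]
  have hfin : -(k * f ts) - c2 = c * σ ts * (r ^ 2 - k) := by
    rw [hc2, htouch]; ring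
  have hr2k : k < r ^ 2 := by
    rw [pow_two, ← Real.mul_self_sqrt hk.le]
    exact mul_self_lt_mul_self (Real.sqrt_nonneg k) hrk
  have hpos2 : 0 < σ ts * (r ^ 2 - k) := mul_pos (hσpos ts hts) (by linarith)
  have hneg2 : c * (σ ts * (r ^ 2 - k)) < 0 := mul_neg_of_neg_of_pos hcneg hpos2
  rw [hfin, mul_assoc] at hBnn
  linarith only [hBnn, hneg2]

lemma trig_hasDeriv (c p q : ℝ) (x : ℝ) :
    HasDerivAt (fun t => p * Real.sin (c * t) + q * Real.cos (c * t))
      (c * (p * Real.cos (c * x) - q * Real.sin (c * x))) x := by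
  have h1 : HasDerivAt (fun t : ℝ => c * t) c x := by
    simpa using (hasDerivAt_id x).const_mul c
  have h2 := ((Real.hasDerivAt_sin (c * x)).comp x h1).const_mul p
  have h3 := ((Real.hasDerivAt_cos (c * x)).comp x h1).const_mul q
  exact (h2.add h3).congr_deriv (by ring)

lemma trig_hasDeriv2 (c p q : ℝ) (x : ℝ) :
    HasDerivAt (fun t => c * (p * Real.cos (c * t) - q * Real.sin (c * t)))
      (-(c ^ 2 * (p * Real.sin (c * x) + q * Real.cos (c * x)))) x := by
  have h1 : HasDerivAt (fun t : ℝ => c * t) c x := by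
    simpa using (hasDerivAt_id x).const_mul c
  have h2 := ((Real.hasDerivAt_cos (c * x)).comp x h1).const_mul p
  have h3 := ((Real.hasDerivAt_sin (c * x)).comp x h1).const_mul q
  have h4 := (h2.sub h3).const_mul c
  exact h4.congr_deriv (by ring)

lemma comparison_trig (k : ℝ) (hk : 0 < k) (a b p q : ℝ) (hab : a < b)
    (hlen : Real.sqrt k * (b - a) < Real.pi)
    (f : ℝ → ℝ) (hcont : ContinuousOn f (Set.Icc a b))
    (hsupp : ∀ t ∈ Set.Ioo a b, SuppSecondDerivLE f t (-(k * f t)))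
    (hfa : p * Real.sin (Real.sqrt k * a) + q * Real.cos (Real.sqrt k * a) ≤ f a)
    (hfb : p * Real.sin (Real.sqrt k * b) + q * Real.cos (Real.sqrt k * b) ≤ f b) :
    ∀ t ∈ Set.Icc a b, p * Real.sin (Real.sqrt k * t) + q * Real.cos (Real.sqrt k * t) ≤ f t := by
  apply comparison k hk a b hab hlen f hcont hsupp _
    (fun t => Real.sqrt k * (p * Real.cos (Real.sqrt k * t) - q * Real.sin (Real.sqrt k * t)))
    (fun x => trig_hasDeriv (Real.sqrt k) p q x) _ hfa hfb
  intro x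
  have := trig_hasDeriv2 (Real.sqrt k) p q x
  rwa [Real.sq_sqrt hk.le] at this

theorem max_location_of_support (k l : ℝ) (hk : 0 < k) (f : ℝ → ℝ)
    (hcont : ContinuousOn f (Set.Icc 0 l))
    (hf0 : f 0 = 0)
    (hsupp : ∀ t ∈ Set.Ioo 0 l, SuppSecondDerivLE f t (-(k * f t)))
    (t₀ : ℝ) (ht₀l : t₀ ≤ l) (ht₀ : t₀ < Real.pi / Real.sqrt k) (hft₀ : f t₀ = 0) :
    (∀ t ∈ Set.Icc 0 t₀, f t = 0) ∨
    ((∀ t ∈ Set.Ioo 0 t₀, 0 < f t) ∧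
      ∃ tbar ∈ Set.Icc 0 t₀, tbar ≤ Real.pi / (2 * Real.sqrt k) ∧
        (∀ t ∈ Set.Icc 0 t₀, f t ≤ f tbar) ∧
        (tbar = Real.pi / (2 * Real.sqrt k) →
          ∃ d : ℝ, HasDerivWithinAt f d (Set.Ici 0) 0 ∧
            ∀ t ∈ Set.Icc 0 tbar, f t = d * snK k t)) := by
  have hπ := Real.pi_pos
  have hsk : 0 < Real.sqrt k := Real.sqrt_pos.mpr hk
  by_cases hz : ∀ t ∈ Set.Icc 0 t₀, f t = 0
  · exact Or.inl hz
  right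
  push_neg at hz
  obtain ⟨t₁, ht₁, hne⟩ := hz
  have ht₀pos : 0 < t₀ := by
    by_contra hle
    push_neg at hle
    exact hne (by rw [le_antisymm (ht₁.2.trans hle) ht₁.1, hf0])
  have hkt₀ : Real.sqrt k * t₀ < Real.pi := by
    rw [lt_div_iff₀ hsk] at ht₀; linarith
  have hIccsub : Set.Icc 0 t₀ ⊆ Set.Icc 0 l := Set.Icc_subset_Icc le_rfl ht₀l
  have hcont₀ : ContinuousOn f (Set.Icc 0 t₀) := hcont.mono hIccsub
  have hsupp₀ : ∀ t ∈ Set.Ioo 0 t₀, SuppSecondDerivLE f t (-(k * f t)) :=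
    fun t ht => hsupp t ⟨ht.1, lt_of_lt_of_le ht.2 ht₀l⟩
  -- Step A: nonnegativity
  have hpos : ∀ t ∈ Set.Icc 0 t₀, 0 ≤ f t :=
    comparison k hk 0 t₀ ht₀pos (by simpa using hkt₀) f hcont₀ hsupp₀
      (fun _ => 0) (fun _ => 0) (fun x => hasDerivAt_const x 0)
      (fun x => by simpa using hasDerivAt_const x (0:ℝ))
      (by rw [hf0]) (by rw [hft₀])
  have ht₁0 : 0 < f t₁ := (hpos t₁ ht₁).lt_of_ne (Ne.symm hne)
  have ht₁Ioo : t₁ ∈ Set.Ioo 0 t₀ := by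
    constructor
    · rcases ht₁.1.lt_or_eq with h | h
      · exact h
      · exfalso; rw [← h, hf0] at ht₁0; exact lt_irrefl 0 ht₁0
    · rcases ht₁.2.lt_or_eq with h | h
      · exact h
      · exfalso; rw [h, hft₀] at ht₁0; exact lt_irrefl 0 ht₁0
  -- positivity on the interior
  have hIoopos : ∀ s ∈ Set.Ioo 0 t₀, 0 < f s := by
    intro s hs
    rcases (hpos s (Set.Ioo_subset_Icc_self hs)).lt_or_eq with h | h
    · exact h
    exfalso
    rcases lt_trichotomy t₁ s with hts | hts | hts
    · -- compare on [t₁, t₀] with C·sin(√k (t₀ - t))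
      have hsin1 : 0 < Real.sin (Real.sqrt k * (t₀ - t₁)) := by
        apply Real.sin_pos_of_pos_of_lt_pi
        · exact mul_pos hsk (by linarith [ht₁Ioo.2])
        · nlinarith [ht₁Ioo.1, hsk]
      set C : ℝ := f t₁ / Real.sin (Real.sqrt k * (t₀ - t₁)) with hC
      have hCpos : 0 < C := div_pos ht₁0 hsin1
      have hval : ∀ t, (-(C * Real.cos (Real.sqrt k * t₀))) * Real.sin (Real.sqrt k * t) +
          (C * Real.sin (Real.sqrt k * t₀)) * Real.cos (Real.sqrt k * t) =
          C * Real.sin (Real.sqrt k * (t₀ - t)) := by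
        intro t
        rw [mul_sub, Real.sin_sub]
        ring
      have hcomp := comparison_trig k hk t₁ t₀
        (-(C * Real.cos (Real.sqrt k * t₀))) (C * Real.sin (Real.sqrt k * t₀)) ht₁Ioo.2
        (by nlinarith [ht₁Ioo.1, hsk]) f
        (hcont₀.mono (Set.Icc_subset_Icc ht₁Ioo.1.le le_rfl))
        (fun t ht => hsupp₀ t ⟨lt_trans ht₁Ioo.1 ht.1, ht.2⟩)
        (by rw [hval t₁, hC, div_mul_cancel₀ _ hsin1.ne'])
        (by rw [hval t₀]; simp [hft₀])
      have h2 := hcomp s ⟨hts.le, hs.2.le⟩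
      rw [hval s, ← h] at h2
      have hsin2 : 0 < Real.sin (Real.sqrt k * (t₀ - s)) := by
        apply Real.sin_pos_of_pos_of_lt_pi
        · exact mul_pos hsk (by linarith [hs.2])
        · nlinarith [hs.1, hsk]
      nlinarith
    · rw [hts, ← h] at ht₁0; exact lt_irrefl _ ht₁0
    · -- compare on [0, t₁] with C'·sin(√k t)
      have hsin1 : 0 < Real.sin (Real.sqrt k * t₁) := by
        apply Real.sin_pos_of_pos_of_lt_pi
        · have h1 := ht₁Ioo.1; positivity
        · nlinarith [ht₁Ioo.2, hsk]
      set C : ℝ := f t₁ / Real.sin (Real.sqrt k * t₁) with hC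
      have hCpos : 0 < C := div_pos ht₁0 hsin1
      have hcomp := comparison_trig k hk 0 t₁ C 0 ht₁Ioo.1
        (by nlinarith [ht₁Ioo.2, hsk]) f
        (hcont₀.mono (Set.Icc_subset_Icc le_rfl ht₁Ioo.2.le))
        (fun t ht => hsupp₀ t ⟨ht.1, lt_trans ht.2 ht₁Ioo.2⟩)
        (by simp [hf0])
        (by rw [hC, div_mul_cancel₀ _ hsin1.ne']; simp)
      have h2 := hcomp s ⟨hs.1.le, hts.le⟩
      have hsin2 : 0 < Real.sin (Real.sqrt k * s) := by
        apply Real.sin_pos_of_pos_of_lt_pi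
        · have h1 := hs.1; positivity
        · nlinarith [hs.2, hsk]
      rw [← h] at h2
      simp only [mul_zero, zero_mul, add_zero] at h2
      nlinarith
  -- maximum point
  obtain ⟨tm, htm, htmmax⟩ := isCompact_Icc.exists_isMaxOn
    (Set.nonempty_Icc.mpr ht₀pos.le) hcont₀
  have hM : 0 < f tm := lt_of_lt_of_le ht₁0 (htmmax ht₁)
  have htm0 : 0 < tm := by
    rcases htm.1.lt_or_eq with h | h
    · exact h
    · exfalso; rw [← h, hf0] at hM; exact lt_irrefl 0 hM
  have htmlt₀ : tm < t₀ := by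
    rcases htm.2.lt_or_eq with h | h
    · exact h
    · exfalso; rw [h, hft₀] at hM; exact lt_irrefl 0 hM
  have hsintm : 0 < Real.sin (Real.sqrt k * tm) := by
    apply Real.sin_pos_of_pos_of_lt_pi
    · positivity
    · nlinarith
  have hPval : Real.sqrt k * (Real.pi / (2 * Real.sqrt k)) = Real.pi / 2 := by
    field_simp
  have htmle : tm ≤ Real.pi / (2 * Real.sqrt k) := by
    by_contra hgt
    push_neg at hgt
    have hP0 : 0 < Real.pi / (2 * Real.sqrt k) := by positivity
    have hgt2 : Real.pi / 2 < Real.sqrt k * tm := by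
      calc Real.pi / 2 = Real.sqrt k * (Real.pi / (2 * Real.sqrt k)) := hPval.symm
        _ < Real.sqrt k * tm := by exact mul_lt_mul_of_pos_left hgt hsk
    have hsinlt1 : Real.sin (Real.sqrt k * tm) < 1 := by
      have h1 : Real.sin (Real.sqrt k * tm) = Real.cos (Real.sqrt k * tm - Real.pi/2) := by
        rw [Real.cos_sub_pi_div_two]
      rw [h1, ← Real.cos_zero]
      apply Real.strictAntiOn_cos
      · exact Set.mem_Icc.mpr ⟨le_rfl, hπ.le⟩
      · constructor <;> nlinarith
      · linarith
    have hcomp := comparison_trig k hk 0 tm (f tm / Real.sin (Real.sqrt k * tm)) 0 htm0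
      (by nlinarith) f
      (hcont₀.mono (Set.Icc_subset_Icc le_rfl htm.2))
      (fun t ht => hsupp₀ t ⟨ht.1, lt_of_lt_of_le ht.2 htm.2⟩)
      (by simp [hf0])
      (by rw [div_mul_cancel₀ _ hsintm.ne']; simp)
    have h2 := hcomp (Real.pi / (2 * Real.sqrt k)) ⟨hP0.le, hgt.le⟩
    rw [hPval, Real.sin_pi_div_two] at h2
    have h3 : f (Real.pi / (2 * Real.sqrt k)) ≤ f tm :=
      htmmax ⟨hP0.le, hgt.le.trans htm.2⟩
    have h4 : f tm / Real.sin (Real.sqrt k * tm) ≤ f tm := by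
      simp only [mul_one, Real.cos_pi_div_two, mul_zero, add_zero] at h2
      linarith
    rw [div_le_iff₀ hsintm] at h4
    nlinarith
  refine ⟨hIoopos, tm, htm, htmle, fun t ht => htmmax ht, fun heq => ?_⟩
  -- rigidity
  have harg : Real.sqrt k * tm = Real.pi / 2 := by rw [heq]; exact hPval
  set M : ℝ := f tm with hMdef
  have hlow : ∀ t ∈ Set.Icc 0 tm, M * Real.sin (Real.sqrt k * t) ≤ f t := by
    have hcomp := comparison_trig k hk 0 tm M 0 htm0
      (by rw [mul_sub, mul_zero, sub_zero, harg]; linarith) f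
      (hcont₀.mono (Set.Icc_subset_Icc le_rfl htm.2))
      (fun t ht => hsupp₀ t ⟨ht.1, lt_of_lt_of_le ht.2 htm.2⟩)
      (by simp [hf0])
      (by rw [harg, Real.sin_pi_div_two, Real.cos_pi_div_two]; simp [hMdef])
    intro t ht
    have := hcomp t ht
    simpa using this
  have hupp : ∀ t ∈ Set.Icc 0 tm, f t ≤ M * Real.sin (Real.sqrt k * t) := by
    by_contra hcon
    push_neg at hcon
    obtain ⟨t₂, ht₂, hgt⟩ := hcon
    have ht₂Ioo : t₂ ∈ Set.Ioo 0 tm := by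
      constructor
      · rcases ht₂.1.lt_or_eq with h' | h'
        · exact h'
        · exfalso; rw [← h', hf0] at hgt; simp at hgt
      · rcases ht₂.2.lt_or_eq with h' | h'
        · exact h'
        · exfalso; rw [h', harg, Real.sin_pi_div_two, mul_one] at hgt
          exact lt_irrefl _ hgt
    have hcos2 : 0 < Real.cos (Real.sqrt k * t₂) := by
      apply Real.cos_pos_of_mem_Ioo
      constructor
      · have : 0 < Real.sqrt k * t₂ := by have := ht₂Ioo.1; positivity
        linarith
      · have : Real.sqrt k * t₂ < Real.sqrt k * tm := mul_lt_mul_of_pos_left ht₂Ioo.2 hsk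
        rw [harg] at this; exact this
    set c : ℝ := (f t₂ - M * Real.sin (Real.sqrt k * t₂)) / Real.cos (Real.sqrt k * t₂) with hcdef
    have hcpos : 0 < c := div_pos (by linarith) hcos2
    have hcomp := comparison_trig k hk t₂ tm M c ht₂Ioo.2
      (by nlinarith [ht₂Ioo.1, hsk, harg]) f
      (hcont₀.mono (Set.Icc_subset_Icc ht₂Ioo.1.le htm.2))
      (fun t ht => hsupp₀ t ⟨lt_trans ht₂Ioo.1 ht.1, lt_of_lt_of_le ht.2 htm.2⟩)
      (by rw [hcdef, div_mul_cancel₀ _ hcos2.ne']; linarith)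
      (by rw [harg, Real.sin_pi_div_two, Real.cos_pi_div_two]; simp [hMdef])
    -- the comparison function exceeds M slightly to the left of tm
    set h : ℝ → ℝ := fun t => M * Real.sin (Real.sqrt k * t) + c * Real.cos (Real.sqrt k * t)
      with hhdef
    have hhtm : h tm = M := by
      rw [hhdef]; simp only []
      rw [harg, Real.sin_pi_div_two, Real.cos_pi_div_two]; ring
    have hd : HasDerivAt h (Real.sqrt k * (M * Real.cos (Real.sqrt k * tm) -
        c * Real.sin (Real.sqrt k * tm))) tm := trig_hasDeriv _ _ _ _
    have hdneg : Real.sqrt k * (M * Real.cos (Real.sqrt k * tm) -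
        c * Real.sin (Real.sqrt k * tm)) < 0 := by
      rw [harg, Real.sin_pi_div_two, Real.cos_pi_div_two, mul_zero, mul_one, zero_sub]
      exact mul_neg_of_pos_of_neg hsk (neg_lt_zero.mpr hcpos)
    rw [hasDerivAt_iff_tendsto_slope] at hd
    have hev1 : ∀ᶠ x in nhdsWithin tm {tm}ᶜ, slope h tm x < 0 := hd.eventually_lt_const hdneg
    have hle : nhdsWithin tm (Set.Iio tm) ≤ nhdsWithin tm {tm}ᶜ :=
      nhdsWithin_mono tm (fun x hx => ne_of_lt hx)
    have hev2 : ∀ᶠ x in nhdsWithin tm (Set.Iio tm), slope h tm x < 0 := hle hev1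
    have hev3 : ∀ᶠ x in nhdsWithin tm (Set.Iio tm), x ∈ Set.Ioo t₂ tm :=
      eventually_of_mem (Ioo_mem_nhdsLT_of_mem ⟨ht₂Ioo.2, le_rfl⟩) (fun x hx => hx)
    obtain ⟨t₃, hs3, ht₃⟩ := (hev2.and hev3).exists
    have hnum : 0 < h t₃ - h tm := by
      rw [slope_def_field] at hs3
      have hden : t₃ - tm < 0 := by linarith [ht₃.2]
      by_contra hnn
      push_neg at hnn
      rcases hnn.lt_or_eq with hlt | heq0
      · have := div_pos_of_neg_of_neg hlt hden
        linarith
      · rw [heq0, zero_div] at hs3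
        exact lt_irrefl _ hs3
    have h5 : h t₃ ≤ f t₃ := by simpa [hhdef] using hcomp t₃ ⟨ht₃.1.le, ht₃.2.le⟩
    have h6 : f t₃ ≤ M := htmmax ⟨le_trans ht₂Ioo.1.le ht₃.1.le, ht₃.2.le.trans htm.2⟩
    rw [hhtm] at hnum
    linarith only [hnum, h5, h6]
  have feq : ∀ t ∈ Set.Icc 0 tm, f t = M * Real.sin (Real.sqrt k * t) :=
    fun t ht => le_antisymm (hupp t ht) (hlow t ht)
  refine ⟨M * Real.sqrt k, ?_, ?_⟩
  · have hg : HasDerivAt (fun t => M * Real.sin (Real.sqrt k * t) + 0 * Real.cos (Real.sqrt k * t))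
        (Real.sqrt k * (M * Real.cos (Real.sqrt k * 0) - 0 * Real.sin (Real.sqrt k * 0))) 0 :=
      trig_hasDeriv _ _ _ _
    have hg' : HasDerivAt (fun t => M * Real.sin (Real.sqrt k * t)) (M * Real.sqrt k) 0 := by
      have h1 : (fun t => M * Real.sin (Real.sqrt k * t) + 0 * Real.cos (Real.sqrt k * t)) =
          (fun t => M * Real.sin (Real.sqrt k * t)) := by funext t; ring
      rw [h1] at hg
      convert hg using 1
      simp [Real.cos_zero]
      ring
    have hmem : Set.Ici (0:ℝ) ∩ Set.Iio tm ∈ nhdsWithin (0:ℝ) (Set.Ici 0) :=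
      inter_mem_nhdsWithin _ (Iio_mem_nhds htm0)
    have hEvEq : f =ᶠ[nhdsWithin (0:ℝ) (Set.Ici 0)] (fun t => M * Real.sin (Real.sqrt k * t)) :=
      eventuallyEq_of_mem hmem (fun x hx => feq x ⟨hx.1, hx.2.le⟩)
    exact (hg'.hasDerivWithinAt).congr_of_eventuallyEq hEvEq (by simp [hf0])
  · intro t ht
    rw [feq t ht, snK, if_pos hk]
    field_simp
end

section
/- Let k > 0 and let f : [0,l] → ℝ be continuous with f(0)=0, f''(t)+k·f(t) ≤ 0 in the support sense on (0,l), l ≤ π/√k, and f'_+(0) < 0. Then f is strictly decreasing on [0, min(l, π/(2√k))]. -/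
open Filter Set MeasureTheory intervalIntegral

lemma tay (Φ Φ' : ℝ → ℝ) (x0 c : ℝ)
    (h1 : ∀ x, HasDerivAt Φ (Φ' x) x)
    (h2 : HasDerivAt Φ' c x0) (ε : ℝ) (hε : 0 < ε) :
    ∀ᶠ τ in nhds (0:ℝ), |Φ (x0+τ) - Φ x0 - Φ' x0 * τ - c/2 * τ^2| ≤ ε * τ^2 := by
  have h2' : ∀ᶠ x in nhds x0, |Φ' x - Φ' x0 - c * (x - x0)| ≤ ε * |x - x0| := by
    have := (hasDerivAt_iff_isLittleO.mp h2).def hε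
    filter_upwards [this] with x hx
    simpa [Real.norm_eq_abs, abs_sub_comm, mul_comm] using hx
  rw [Metric.eventually_nhds_iff] at h2'
  obtain ⟨η, hη, hball⟩ := h2'
  rw [Metric.eventually_nhds_iff]
  refine ⟨η, hη, fun τ hτ => ?_⟩
  simp only [Real.dist_eq, sub_zero] at hτ
  -- E x := Φ x - Φ' x0 * x - c/2 * (x - x0)^2
  set E : ℝ → ℝ := fun x => Φ x - Φ' x0 * x - c/2 * (x - x0)^2 with hE
  have hEd : ∀ x, HasDerivAt E (Φ' x - Φ' x0 - c * (x - x0)) x := by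
    intro x
    have : HasDerivAt (fun x => c/2 * (x - x0)^2) (c/2 * (2 * (x - x0))) x := by
      have := ((hasDerivAt_id x).sub_const x0).pow 2
      simpa using this.const_mul (c/2)
    have h := ((h1 x).sub ((hasDerivAt_id x).const_mul (Φ' x0))).sub this
    exact h.congr_deriv (by ring)
  set s : Set ℝ := Icc (x0 - |τ|) (x0 + |τ|) with hs
  have hmem : ∀ x ∈ s, |x - x0| ≤ |τ| := by
    intro x hx; rw [abs_sub_le_iff]; constructor <;> [skip; skip] <;>
      simp only [hs, mem_Icc] at hx <;> linarith [hx.1, hx.2]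
  have key : ‖E (x0 + τ) - E x0‖ ≤ (ε * |τ|) * ‖(x0 + τ) - x0‖ := by
    apply Convex.norm_image_sub_le_of_norm_hasDerivWithin_le (s := s)
      (f' := fun x => Φ' x - Φ' x0 - c * (x - x0))
      (fun x _ => (hEd x).hasDerivWithinAt) ?_ (convex_Icc _ _) ?_ ?_
    · intro x hx
      have h1' := hball (y := x) (by simpa [Real.dist_eq] using lt_of_le_of_lt (hmem x hx) hτ)
      calc ‖Φ' x - Φ' x0 - c * (x - x0)‖ ≤ ε * |x - x0| := h1'
        _ ≤ ε * |τ| := mul_le_mul_of_nonneg_left (hmem x hx) hε.le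
    · simp only [hs, mem_Icc]; constructor <;> linarith [abs_nonneg τ]
    · simp only [hs, mem_Icc]; constructor <;> linarith [le_abs_self τ, neg_abs_le τ]
  have : E (x0 + τ) - E x0 = Φ (x0+τ) - Φ x0 - Φ' x0 * τ - c/2 * τ^2 := by
    simp only [hE]; ring
  rw [this] at key
  simp only [Real.norm_eq_abs] at key
  calc |Φ (x0+τ) - Φ x0 - Φ' x0 * τ - c/2 * τ^2| ≤ ε * |τ| * |x0 + τ - x0| := key
    _ = ε * τ^2 := by
      rw [show x0 + τ - x0 = τ by ring, mul_assoc, ← abs_mul, abs_mul_self]; ring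

set_option maxHeartbeats 1000000 in
lemma keyMP (k l : ℝ) (hk : 0 < k) (f : ℝ → ℝ)
    (hcont : ContinuousOn f (Set.Icc 0 l))
    (hf0 : f 0 = 0)
    (hsupp : ∀ t ∈ Set.Ioo 0 l, SuppSecondDerivLE f t (-(k * f t)))
    (y : ℝ) (hy0 : 0 < y) (hyl : y ≤ l)
    (hyq : Real.sqrt k * y < Real.pi / 2) :
    ∀ t ∈ Set.Icc 0 y, f y * Real.sin (Real.sqrt k * t) ≤ f t * Real.sin (Real.sqrt k * y) := by
  set S := Real.sqrt k with hSdef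
  have hS : 0 < S := Real.sqrt_pos.mpr hk
  have hkS : S^2 = k := Real.sq_sqrt hk.le
  have hsiny : 0 < Real.sin (S*y) :=
    Real.sin_pos_of_pos_of_lt_pi (by positivity) (hyq.trans (by linarith [Real.pi_pos]))
  set c := f y / Real.sin (S*y) with hcdef
  set w : ℝ → ℝ := fun t => f t - c * Real.sin (S*t) with hwdef
  set ψ : ℝ → ℝ := fun t => Real.cos (S*t) with hψdef
  have hψpos : ∀ t ∈ Icc (0:ℝ) y, 0 < ψ t := by
    intro t ht
    apply Real.cos_pos_of_mem_Ioo
    constructor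
    · have h1 : (0:ℝ) ≤ S * t := mul_nonneg hS.le ht.1
      have := Real.pi_pos
      linarith
    · have : S * t ≤ S * y := mul_le_mul_of_nonneg_left ht.2 hS.le
      linarith
  have hψy : 0 < ψ y := hψpos y (right_mem_Icc.mpr hy0.le)
  have hψy1 : ψ y ≤ 1 := Real.cos_le_one _
  have hwy : w y = 0 := by
    simp only [hwdef, hcdef]
    rw [div_mul_cancel₀ _ (ne_of_gt hsiny)]; ring
  suffices hw : ∀ t ∈ Icc 0 y, 0 ≤ w t by
    intro t ht
    have h1 := hw t ht
    have hcy : c * Real.sin (S*y) = f y := div_mul_cancel₀ _ (ne_of_gt hsiny)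
    have h2 : c * Real.sin (S*t) * Real.sin (S*y) ≤ f t * Real.sin (S*y) := by
      apply mul_le_mul_of_nonneg_right _ hsiny.le
      simp only [hwdef] at h1; linarith
    calc f y * Real.sin (S*t) = c * Real.sin (S*t) * Real.sin (S*y) := by rw [← hcy]; ring
      _ ≤ f t * Real.sin (S*y) := h2
  intro t ht
  have key : ∀ δ : ℝ, 0 < δ → δ * (ψ y - 1) ≤ w t * ψ y := by
    intro δ hδ
    set v : ℝ → ℝ := fun s => (w s - δ)/ψ s with hvdef
    have hvcont : ContinuousOn v (Icc 0 y) := by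
      apply ContinuousOn.div
      · exact ((hcont.mono (Icc_subset_Icc le_rfl hyl)).sub
          ((continuous_const.mul (Real.continuous_sin.comp
            (continuous_const.mul continuous_id))).continuousOn)).sub continuousOn_const
      · exact (Real.continuous_cos.comp (continuous_const.mul continuous_id)).continuousOn
      · exact fun s hs => (hψpos s hs).ne'
    obtain ⟨t0, ht0mem, ht0min⟩ :=
      isCompact_Icc.exists_isMinOn (nonempty_Icc.mpr hy0.le) hvcont
    have ht0min' : ∀ s ∈ Icc (0:ℝ) y, v t0 ≤ v s := fun s hs => isMinOn_iff.mp ht0min s hs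
    have hv0 : -δ/ψ y ≤ v t0 := by
      rcases eq_or_lt_of_le ht0mem.1 with h0 | h0
      · have hv00 : v t0 = -δ := by
          rw [← h0]; simp [hvdef, hwdef, hψdef, hf0]
        rw [hv00, neg_div]
        apply neg_le_neg
        rw [le_div_iff₀ hψy]; nlinarith
      rcases eq_or_lt_of_le ht0mem.2 with hy' | hy'
      · rw [hy']
        simp only [hvdef, hwy]
        rw [show (0:ℝ) - δ = -δ by ring]
      -- interior case: contradiction
      exfalso
      set m := v t0 with hmdef
      have hψt0 : 0 < ψ t0 := hψpos t0 ht0mem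
      set G : ℝ → ℝ := fun s => c * Real.sin (S*s) + m * Real.cos (S*s) with hGdef
      set G' : ℝ → ℝ := fun s => c * S * Real.cos (S*s) - m * S * Real.sin (S*s) with hG'def
      have hsin' : ∀ x : ℝ, HasDerivAt (fun s : ℝ => Real.sin (S*s)) (Real.cos (S*x) * S) x := by
        intro x
        have h := (Real.hasDerivAt_sin (S*x)).comp x ((hasDerivAt_id x).const_mul S)
        simpa [Function.comp_def] using h
      have hcos' : ∀ x : ℝ, HasDerivAt (fun s : ℝ => Real.cos (S*s)) (-Real.sin (S*x) * S) x := by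
        intro x
        have h := (Real.hasDerivAt_cos (S*x)).comp x ((hasDerivAt_id x).const_mul S)
        simpa [Function.comp_def] using h
      have hGd : ∀ x, HasDerivAt G (G' x) x := by
        intro x
        have h := ((hsin' x).const_mul c).add ((hcos' x).const_mul m)
        exact h.congr_deriv (by simp only [hG'def]; ring)
      have hGd2 : HasDerivAt G' (-(S^2 * G t0)) t0 := by
        have h := ((hcos' t0).const_mul (c*S)).sub ((hsin' t0).const_mul (m*S))
        exact h.congr_deriv (by simp only [hGdef]; ring)
      have hmψ : m * ψ t0 = w t0 - δ := by
        rw [hmdef]; simp only [hvdef]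
        field_simp
      have hft0 : f t0 = G t0 + δ := by
        simp only [hGdef, hwdef] at hmψ ⊢
        simp only [hψdef] at hmψ
        linarith
      have hznn : ∀ s ∈ Icc (0:ℝ) y, 0 ≤ f s - G s - δ := by
        intro s hs
        have h1 : m ≤ v s := ht0min' s hs
        have hψs := hψpos s hs
        have h2 : m * ψ s ≤ w s - δ := by
          simp only [hvdef] at h1
          exact (le_div_iff₀ hψs).mp h1
        simp only [hGdef, hwdef, hψdef] at h2 ⊢
        linarith
      obtain ⟨A, hA⟩ := hsupp t0 ⟨h0, lt_of_lt_of_le hy' hyl⟩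
      have hε0 : 0 < k*δ/16 := by positivity
      have h1 := hA (k*δ/16) hε0
      have h2 := tay G G' t0 (-(S^2 * G t0)) hGd hGd2 (k*δ/16) hε0
      have h3 : ∀ᶠ τ in nhds (0:ℝ), t0 + τ ∈ Icc (0:ℝ) y := by
        rw [Metric.eventually_nhds_iff]
        refine ⟨min t0 (y - t0), lt_min h0 (by linarith), fun τ hτ => ?_⟩
        rw [Real.dist_eq, sub_zero] at hτ
        have ha := abs_lt.mp (lt_of_lt_of_le hτ (min_le_left _ _))
        have hb := abs_lt.mp (lt_of_lt_of_le hτ (min_le_right _ _))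
        exact ⟨by linarith [ha.1], by linarith [hb.2]⟩
      obtain ⟨η, hη, H⟩ := Metric.eventually_nhds_iff.mp ((h1.and h2).and h3)
      set σ := η/2 with hσdef
      have hσ0 : 0 < σ := by positivity
      have Hp := H (y := σ) (by rw [Real.dist_eq, sub_zero, abs_of_pos hσ0]; linarith)
      have Hm := H (y := -σ) (by rw [Real.dist_eq, sub_zero, abs_neg, abs_of_pos hσ0]; linarith)
      obtain ⟨⟨hfp, hGp⟩, hmemp⟩ := Hp
      obtain ⟨⟨hfm, hGm⟩, hmemm⟩ := Hm
      have hzp := hznn _ hmemp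
      have hzm := hznn _ hmemm
      clear_value S c w ψ v m G G'
      have ecomb : ∀ τ : ℝ,
          f (t0+τ) ≤ f t0 + A*τ + (-(k * f t0))/2*τ^2 + k*δ/16*τ^2 →
          |G (t0+τ) - G t0 - G' t0 * τ - (-(S^2 * G t0))/2 * τ^2| ≤ k*δ/16*τ^2 →
          0 ≤ f (t0+τ) - G (t0+τ) - δ →
          0 ≤ (A - G' t0)*τ - 3*(k*δ)/8*τ^2 := by
        intro τ hfτ hGτ hzτ
        have hGτ' := (abs_le.mp hGτ).1
        have h4 : (-(k * f t0))/2*τ^2 = -(S^2 * G t0)/2*τ^2 - (k*δ)/2 * τ^2 := by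
          rw [hkS, hft0]; ring
        linarith [hfτ, hGτ', hzτ, h4, hft0]
      have e1 := ecomb σ hfp hGp hzp
      have e2 := ecomb (-σ) hfm hGm hzm
      have hsq : (-σ)^2 = σ^2 := by ring
      rw [hsq] at e2
      have hkδ : 0 < k*δ*σ^2 := by positivity
      linarith [e1, e2, hkδ]
    -- conclude key from hv0
    have h1 : v t0 ≤ v t := ht0min' t ht
    have h2 : -δ/ψ y ≤ v t := le_trans hv0 h1
    have hψt := hψpos t ht
    have hψt1 : ψ t ≤ 1 := Real.cos_le_one _
    have h3 : -δ * ψ t ≤ (w t - δ) * ψ y := by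
      simp only [hvdef] at h2
      exact (div_le_div_iff₀ hψy hψt).mp h2
    have h4 : δ * ψ t ≤ δ * 1 := mul_le_mul_of_nonneg_left hψt1 hδ.le
    linarith
  -- conclude 0 ≤ w t from key
  clear_value S c w ψ
  by_contra hneg
  push_neg at hneg
  have hwψ : w t * ψ y < 0 := mul_neg_of_neg_of_pos hneg hψy
  set Q := 1 - ψ y with hQdef
  have hQ0 : 0 ≤ Q := by rw [hQdef]; linarith
  set P := -(w t * ψ y) with hPdef
  have hP0 : 0 < P := by rw [hPdef]; linarith
  have hkey := key (P/(Q+1)) (div_pos hP0 (by linarith))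
  rw [show ψ y - 1 = -Q by rw [hQdef]; ring] at hkey
  -- δ*(ψ y - 1) = -δ*Q ; need contradiction with -δ*Q ≤ -P, i.e. δ*Q < P
  have hδQ : (P/(Q+1)) * Q < P := by
    rw [div_mul_eq_mul_div, div_lt_iff₀ (by linarith : (0:ℝ) < Q + 1)]
    nlinarith
  clear_value Q P
  linarith [hkey, hδQ, hPdef]


lemma keyA (k l : ℝ) (hk : 0 < k) (f : ℝ → ℝ)
    (hcont : ContinuousOn f (Set.Icc 0 l))
    (hf0 : f 0 = 0)
    (hsupp : ∀ t ∈ Set.Ioo 0 l, SuppSecondDerivLE f t (-(k * f t)))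
    (d : ℝ) (hd : HasDerivWithinAt f d (Set.Ici 0) 0)
    (y : ℝ) (hy0 : 0 < y) (hyl : y ≤ l)
    (hyq : Real.sqrt k * y < Real.pi / 2) :
    f y * Real.sqrt k ≤ d * Real.sin (Real.sqrt k * y) := by
  set S := Real.sqrt k with hSdef
  have hS : 0 < S := Real.sqrt_pos.mpr hk
  have hsiny : 0 < Real.sin (S*y) :=
    Real.sin_pos_of_pos_of_lt_pi (by positivity) (hyq.trans (by linarith [Real.pi_pos]))
  have hMP := keyMP k l hk f hcont hf0 hsupp y hy0 hyl hyq
  set c := f y / Real.sin (S*y) with hcdef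
  have hslope : Tendsto (fun t => f t / t) (nhdsWithin 0 (Set.Ioi 0)) (nhds d) := by
    have h := hasDerivWithinAt_iff_tendsto_slope.mp hd
    rw [Set.Ici_sdiff_left] at h
    apply h.congr'
    filter_upwards [self_mem_nhdsWithin] with t ht
    rw [slope_def_field, hf0]; ring
  have hp : HasDerivAt (fun t : ℝ => c * Real.sin (S*t)) (c * S) 0 := by
    have h := ((Real.hasDerivAt_sin (S*0)).comp 0 ((hasDerivAt_id 0).const_mul S)).const_mul c
    simpa using h
  have hcS : Tendsto (fun t => c * Real.sin (S*t) / t) (nhdsWithin 0 (Set.Ioi 0)) (nhds (c * S)) := by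
    have h := hasDerivAt_iff_tendsto_slope.mp hp
    have h2 : Tendsto (slope (fun t : ℝ => c * Real.sin (S*t)) 0)
        (nhdsWithin 0 (Set.Ioi 0)) (nhds (c * S)) :=
      h.mono_left (nhdsWithin_mono 0 (fun u hu => ne_of_gt hu))
    apply h2.congr'
    filter_upwards [self_mem_nhdsWithin] with t ht
    rw [slope_def_field]; simp
  have hev : ∀ᶠ t in nhdsWithin 0 (Set.Ioi 0), c * Real.sin (S*t) / t ≤ f t / t := by
    filter_upwards [Ioo_mem_nhdsGT_of_mem (show (0:ℝ) ∈ Set.Ico 0 y from ⟨le_rfl, hy0⟩)]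
      with t ht
    have h1 := hMP t ⟨ht.1.le, ht.2.le⟩
    have h2 : c * Real.sin (S*t) ≤ f t := by
      rw [hcdef, div_mul_eq_mul_div, div_le_iff₀ hsiny]
      exact h1
    exact div_le_div_of_nonneg_right h2 ht.1.le
  have hle : c * S ≤ d := le_of_tendsto_of_tendsto hcS hslope hev
  rw [hcdef, div_mul_eq_mul_div, div_le_iff₀ hsiny] at hle
  exact hle

theorem strictAnti_of_neg_right_deriv (k l : ℝ) (hk : 0 < k) (f : ℝ → ℝ)
    (hl : l ≤ Real.pi / Real.sqrt k)
    (hcont : ContinuousOn f (Set.Icc 0 l))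
    (hf0 : f 0 = 0)
    (hsupp : ∀ t ∈ Set.Ioo 0 l, SuppSecondDerivLE f t (-(k * f t)))
    (d : ℝ) (hd : HasDerivWithinAt f d (Set.Ici 0) 0) (hdneg : d < 0) :
    StrictAntiOn f (Set.Icc 0 (min l (Real.pi / (2 * Real.sqrt k)))) := by
  intro x hx y hy hxy
  set S := Real.sqrt k with hSdef
  have hS : 0 < S := Real.sqrt_pos.mpr hk
  have hπ := Real.pi_pos
  simp only [Set.mem_Icc] at hx hy
  have hy0 : 0 < y := lt_of_le_of_lt hx.1 hxy
  have hyl : y ≤ l := hy.2.trans (min_le_left _ _)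
  have hyq : S * y ≤ Real.pi/2 := by
    have h1 : y ≤ Real.pi/(2*S) := hy.2.trans (min_le_right _ _)
    rw [le_div_iff₀ (by positivity)] at h1
    linarith
  -- extended first bound
  have P1 : ∀ b, 0 < b → b ≤ min l (Real.pi/(2*S)) → f b * S ≤ d * Real.sin (S*b) := by
    intro b hb0 hbT
    have hbl : b ≤ l := hbT.trans (min_le_left _ _)
    by_cases hbq : S * b < Real.pi/2
    · exact keyA k l hk f hcont hf0 hsupp d hd b hb0 hbl hbq
    · have hbq2 : S * b ≤ Real.pi/2 := by
        have h1 : b ≤ Real.pi/(2*S) := hbT.trans (min_le_right _ _)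
        rw [le_div_iff₀ (by positivity)] at h1
        linarith
      have hbeq : S * b = Real.pi/2 := le_antisymm hbq2 (not_lt.mp hbq)
      haveI hF : (nhdsWithin b (Set.Ioo 0 b)).NeBot := by
        apply mem_closure_iff_nhdsWithin_neBot.mp
        rw [closure_Ioo (ne_of_lt hb0)]
        exact ⟨hb0.le, le_rfl⟩
      have hsub : Set.Ioo (0:ℝ) b ⊆ Set.Icc 0 l :=
        fun u hu => ⟨hu.1.le, hu.2.le.trans hbl⟩
      have hcf : Tendsto f (nhdsWithin b (Set.Ioo 0 b)) (nhds (f b)) :=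
        (hcont b ⟨hb0.le, hbl⟩).mono hsub
      have hfS : Tendsto (fun b' => f b' * S) (nhdsWithin b (Set.Ioo 0 b)) (nhds (f b * S)) :=
        hcf.mul_const S
      have hg : Tendsto (fun b' => d * Real.sin (S*b')) (nhdsWithin b (Set.Ioo 0 b))
          (nhds (d * Real.sin (S*b))) := by
        apply Tendsto.mono_left _ nhdsWithin_le_nhds
        exact ((Real.continuous_sin.comp (continuous_const.mul continuous_id)).continuousAt.tendsto.const_mul d)
      apply le_of_tendsto_of_tendsto hfS hg
      filter_upwards [self_mem_nhdsWithin] with b' hb'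
      have hb'q : S * b' < Real.pi/2 := by
        rw [← hbeq]
        exact mul_lt_mul_of_pos_left hb'.2 hS
      exact keyA k l hk f hcont hf0 hsupp d hd b' hb'.1 (hb'.2.le.trans hbl) hb'q
  -- extended comparison bound
  have P2 : ∀ a b, 0 ≤ a → a < b → b ≤ min l (Real.pi/(2*S)) →
      f b * Real.sin (S*a) ≤ f a * Real.sin (S*b) := by
    intro a b ha0 hab hbT
    have hb0 : 0 < b := lt_of_le_of_lt ha0 hab
    have hbl : b ≤ l := hbT.trans (min_le_left _ _)
    by_cases hbq : S * b < Real.pi/2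
    · exact keyMP k l hk f hcont hf0 hsupp b hb0 hbl hbq a ⟨ha0, hab.le⟩
    · have hbq2 : S * b ≤ Real.pi/2 := by
        have h1 : b ≤ Real.pi/(2*S) := hbT.trans (min_le_right _ _)
        rw [le_div_iff₀ (by positivity)] at h1
        linarith
      have hbeq : S * b = Real.pi/2 := le_antisymm hbq2 (not_lt.mp hbq)
      haveI hF : (nhdsWithin b (Set.Ioo a b)).NeBot := by
        apply mem_closure_iff_nhdsWithin_neBot.mp
        rw [closure_Ioo (ne_of_lt hab)]
        exact ⟨hab.le, le_rfl⟩
      have hsub : Set.Ioo a b ⊆ Set.Icc 0 l :=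
        fun u hu => ⟨ha0.trans hu.1.le, hu.2.le.trans hbl⟩
      have hcf : Tendsto f (nhdsWithin b (Set.Ioo a b)) (nhds (f b)) :=
        (hcont b ⟨hb0.le, hbl⟩).mono hsub
      have hfS : Tendsto (fun b' => f b' * Real.sin (S*a)) (nhdsWithin b (Set.Ioo a b))
          (nhds (f b * Real.sin (S*a))) := hcf.mul_const _
      have hg : Tendsto (fun b' => f a * Real.sin (S*b')) (nhdsWithin b (Set.Ioo a b))
          (nhds (f a * Real.sin (S*b))) := by
        apply Tendsto.mono_left _ nhdsWithin_le_nhds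
        exact ((Real.continuous_sin.comp (continuous_const.mul continuous_id)).continuousAt.tendsto.const_mul (f a))
      apply le_of_tendsto_of_tendsto hfS hg
      filter_upwards [self_mem_nhdsWithin] with b' hb'
      have hb'q : S * b' < Real.pi/2 := by
        rw [← hbeq]
        exact mul_lt_mul_of_pos_left hb'.2 hS
      exact keyMP k l hk f hcont hf0 hsupp b' (lt_of_le_of_lt ha0 hb'.1) (hb'.2.le.trans hbl)
        hb'q a ⟨ha0, hb'.1.le⟩
  -- conclude
  have hsiny : 0 < Real.sin (S*y) :=
    Real.sin_pos_of_pos_of_lt_pi (by positivity) (by linarith)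
  have h1y := P1 y hy0 hy.2
  have hfy : f y < 0 := by nlinarith [mul_neg_of_neg_of_pos hdneg hsiny]
  rcases eq_or_lt_of_le hx.1 with hx0 | hx0
  · rw [← hx0, hf0]
    exact hfy
  · have hxql : S * x < S * y := mul_lt_mul_of_pos_left hxy hS
    have hsinx : 0 < Real.sin (S*x) :=
      Real.sin_pos_of_pos_of_lt_pi (by positivity) (by linarith)
    have hSx : 0 ≤ S * x := mul_nonneg hS.le hx.1
    have hSy : 0 ≤ S * y := mul_nonneg hS.le hy.1
    have hsxy : Real.sin (S*x) < Real.sin (S*y) := by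
      apply Real.strictMonoOn_sin ⟨by linarith, by linarith⟩ ⟨by linarith, by linarith⟩ hxql
    have h2 := P2 x y hx.1 hxy hy.2
    have h1 := P1 x hx0 (hxy.le.trans hy.2)
    have hfx : f x < 0 := by nlinarith [mul_neg_of_neg_of_pos hdneg hsinx]
    have h3 : f x * Real.sin (S*y) < f x * Real.sin (S*x) := by nlinarith
    have h4 : f y * Real.sin (S*x) < f x * Real.sin (S*x) := lt_of_le_of_lt h2 h3
    exact lt_of_mul_lt_mul_right h4 hsinx.le
end

section
/- Let 0 < b < 1, m a positive integer, and suppose x, r > 0 satisfy ∫₀ʳ sinh(t)ᵐ dt = ∫₀ˣ ((1/b)·sinh(b t))ᵐ dt. Then b·x < r and ((1/b)^{m+1})·sinh(b x)ᵐ > sinh(r)ᵐ; in particular sn_{k̄}(x)ᵐ > √(−k̄)·sinh(r)ᵐ where k̄ = −b² ∈ (−1,0) and sn_{k̄}(x) = (1/b)·sinh(b x). -/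
open Filter Set intervalIntegral

noncomputable def Fint (m : ℕ) (u : ℝ) : ℝ := ∫ t in (0:ℝ)..u, Real.sinh t ^ m

lemma sinh_pow_cont (m : ℕ) : Continuous (fun t : ℝ => Real.sinh t ^ m) :=
  Real.continuous_sinh.pow m

lemma sinh_pow_intInt (m : ℕ) (a c : ℝ) :
    IntervalIntegrable (fun t : ℝ => Real.sinh t ^ m) MeasureTheory.volume a c :=
  (sinh_pow_cont m).intervalIntegrable a c

lemma hasDerivAt_Fint (m : ℕ) (u : ℝ) :
    HasDerivAt (Fint m) (Real.sinh u ^ m) u :=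
  intervalIntegral.integral_hasDerivAt_right (sinh_pow_intInt m 0 u)
    ((sinh_pow_cont m).stronglyMeasurableAtFilter _ _) (sinh_pow_cont m).continuousAt

lemma Fint_cont (m : ℕ) : Continuous (Fint m) := by
  have : Differentiable ℝ (Fint m) := fun u => (hasDerivAt_Fint m u).differentiableAt
  exact this.continuous

lemma Fint_pos (m : ℕ) {u : ℝ} (hu : 0 < u) : 0 < Fint m u := by
  refine intervalIntegral.intervalIntegral_pos_of_pos_on (sinh_pow_intInt m 0 u) ?_ hu
  intro t ht
  exact pow_pos (Real.sinh_pos_iff.2 ht.1) m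

lemma Fint_mono (m : ℕ) {a c : ℝ} (ha : 0 ≤ a) (hac : a ≤ c) : Fint m a ≤ Fint m c := by
  have h : Fint m c - Fint m a = ∫ t in a..c, Real.sinh t ^ m := by
    rw [Fint, Fint, ← intervalIntegral.integral_add_adjacent_intervals
      (sinh_pow_intInt m 0 a) (sinh_pow_intInt m a c)]
    ring
  have hnn : 0 ≤ ∫ t in a..c, Real.sinh t ^ m := by
    apply intervalIntegral.integral_nonneg hac
    intro t ht
    exact pow_nonneg (Real.sinh_nonneg_iff.2 (le_trans ha ht.1)) m
  linarith [h, hnn]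

/-- `K` positivity: for `m ≥ 1` and `u > 0`,
`m * Fint m u < sinh u ^ (m-1) * cosh u`. -/
lemma K_pos (m : ℕ) (hm : 0 < m) {u : ℝ} (hu : 0 < u) :
    (m : ℝ) * Fint m u < Real.sinh u ^ (m - 1) * Real.cosh u := by
  rcases eq_or_lt_of_le (Nat.one_le_iff_ne_zero.2 hm.ne') with h1 | h2
  · -- m = 1
    have hm1 : m = 1 := h1.symm
    subst hm1
    have hF : Fint 1 u = Real.cosh u - 1 := by
      have h := intervalIntegral.integral_eq_sub_of_hasDerivAt
        (f := Real.cosh) (f' := Real.sinh) (a := (0:ℝ)) (b := u)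
        (fun t _ => Real.hasDerivAt_cosh t)
        (Real.continuous_sinh.intervalIntegrable 0 u)
      simp only [Fint, pow_one]
      rw [h, Real.cosh_zero]
    simp only [hF, pow_zero, one_mul, Nat.cast_one, Nat.sub_self]
    linarith
  · -- m ≥ 2
    have hm2 : 2 ≤ m := h2
    set K : ℝ → ℝ := fun t => Real.sinh t ^ (m - 1) * Real.cosh t - m * Fint m t with hK
    have hKderiv : ∀ t : ℝ, HasDerivAt K ((m - 1 : ℝ) * Real.sinh t ^ (m - 2)) t := by
      intro t
      have h1 : HasDerivAt (fun t => Real.sinh t ^ (m - 1) * Real.cosh t)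
          (((m - 1 : ℕ) : ℝ) * Real.sinh t ^ (m - 1 - 1) * Real.cosh t * Real.cosh t
            + Real.sinh t ^ (m - 1) * Real.sinh t) t :=
        ((Real.hasDerivAt_sinh t).pow (m - 1)).mul (Real.hasDerivAt_cosh t)
      have h2 : HasDerivAt (fun t => (m : ℝ) * Fint m t) ((m : ℝ) * Real.sinh t ^ m) t :=
        (hasDerivAt_Fint m t).const_mul _
      have h3 := h1.sub h2
      convert h3 using 1
      · rfl
      · rfl
      · rfl
      have e1 : m - 1 - 1 = m - 2 := by omega
      have e2 : ((m - 1 : ℕ) : ℝ) = (m : ℝ) - 1 := by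
        have : (1 : ℕ) ≤ m := hm
        push_cast [Nat.cast_sub this]
        ring
      have e3 : Real.cosh t * Real.cosh t = 1 + Real.sinh t ^ 2 := by
        have := Real.cosh_sq t
        nlinarith [Real.cosh_sq t]
      have e4 : Real.sinh t ^ (m - 2) * Real.sinh t ^ 2 = Real.sinh t ^ m := by
        rw [← pow_add]; congr 1; omega
      have e5 : Real.sinh t ^ (m - 1) * Real.sinh t = Real.sinh t ^ m := by
        rw [← pow_succ]; congr 1; omega
      rw [e1, e2, e5]
      linear_combination (-((m : ℝ) - 1) * Real.sinh t ^ (m - 2)) * e3 - ((m : ℝ) - 1) * e4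
    have hKeq : K u - K 0 = ∫ t in (0:ℝ)..u, (m - 1 : ℝ) * Real.sinh t ^ (m - 2) := by
      rw [← intervalIntegral.integral_eq_sub_of_hasDerivAt (fun t _ => hKderiv t) ?_]
      exact (continuous_const.mul ((sinh_pow_cont (m - 2)))).intervalIntegrable 0 u
    have hK0 : K 0 = 0 := by
      have hne : m - 1 ≠ 0 := by omega
      have hz : Real.sinh 0 ^ (m - 1) = 0 := by
        rw [Real.sinh_zero]; exact zero_pow hne
      simp [hK, Fint, zero_pow hne]
    have hpos : 0 < ∫ t in (0:ℝ)..u, (m - 1 : ℝ) * Real.sinh t ^ (m - 2) := by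
      refine intervalIntegral.intervalIntegral_pos_of_pos_on
        ((continuous_const.mul (sinh_pow_cont (m - 2))).intervalIntegrable 0 u) ?_ hu
      intro t ht
      have : (0 : ℝ) < (m : ℝ) - 1 := by
        have : (2 : ℝ) ≤ (m : ℝ) := by exact_mod_cast hm2
        linarith
      exact mul_pos this (pow_pos (Real.sinh_pos_iff.2 ht.1) _)
    have hKu : 0 < K u := by linarith [hKeq, hpos, hK0]
    simpa [hK, sub_pos] using hKu

/-- `H` positivity: `m * cosh u * Fint m u < sinh u ^ (m+1)` for `u > 0`. -/
lemma H_pos (m : ℕ) (hm : 0 < m) {u : ℝ} (hu : 0 < u) :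
    (m : ℝ) * Real.cosh u * Fint m u < Real.sinh u ^ (m + 1) := by
  set H : ℝ → ℝ := fun t => Real.sinh t ^ (m + 1) - m * Real.cosh t * Fint m t with hHdef
  have hHderiv : ∀ t : ℝ,
      HasDerivAt H (Real.sinh t * (Real.sinh t ^ (m - 1) * Real.cosh t - m * Fint m t)) t := by
    intro t
    have h1 : HasDerivAt (fun t => Real.sinh t ^ (m + 1))
        (((m + 1 : ℕ) : ℝ) * Real.sinh t ^ (m + 1 - 1) * Real.cosh t) t :=
      (Real.hasDerivAt_sinh t).pow (m + 1)
    have h2 : HasDerivAt (fun t => (m : ℝ) * Real.cosh t * Fint m t)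
        ((m : ℝ) * Real.sinh t * Fint m t + (m : ℝ) * Real.cosh t * Real.sinh t ^ m) t := by
      have := (((Real.hasDerivAt_cosh t).const_mul (m : ℝ)).mul (hasDerivAt_Fint m t))
      convert this using 1
      · rfl
      · rfl
      · rfl
    have h3 := h1.sub h2
    convert h3 using 1
    · rfl
    · rfl
    · rfl
    have e5 : Real.sinh t * Real.sinh t ^ (m - 1) = Real.sinh t ^ m := by
      rw [← pow_succ']; congr 1; omega
    simp only [Nat.add_sub_cancel]
    push_cast
    linear_combination Real.cosh t * e5
  have hHeq : H u - H 0 = ∫ t in (0:ℝ)..u,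
      Real.sinh t * (Real.sinh t ^ (m - 1) * Real.cosh t - m * Fint m t) := by
    rw [← intervalIntegral.integral_eq_sub_of_hasDerivAt (fun t _ => hHderiv t) ?_]
    exact (Real.continuous_sinh.mul (((sinh_pow_cont (m - 1)).mul Real.continuous_cosh).sub
      (continuous_const.mul (Fint_cont m)))).intervalIntegrable 0 u
  have hH0 : H 0 = 0 := by
    have hne : m + 1 ≠ 0 := by omega
    have hz : Real.sinh 0 ^ (m + 1) = 0 := by
      rw [Real.sinh_zero]; exact zero_pow hne
    simp [hHdef, hz, Fint]
  have hpos : 0 < ∫ t in (0:ℝ)..u,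
      Real.sinh t * (Real.sinh t ^ (m - 1) * Real.cosh t - m * Fint m t) := by
    refine intervalIntegral.intervalIntegral_pos_of_pos_on
      ((Real.continuous_sinh.mul (((sinh_pow_cont (m - 1)).mul Real.continuous_cosh).sub
        (continuous_const.mul (Fint_cont m)))).intervalIntegrable 0 u) ?_ hu
    intro t ht
    have hK := K_pos m hm ht.1
    exact mul_pos (Real.sinh_pos_iff.2 ht.1) (by linarith)
  have hHu : 0 < H u := by linarith [hHeq, hpos, hH0]
  simpa [hHdef, sub_pos] using hHu

/-- The ratio `Fint m u / sinh u ^ m` is strictly increasing on `(0, ∞)`. -/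
lemma ratio_lt (m : ℕ) (hm : 0 < m) {a r : ℝ} (ha : 0 < a) (har : a < r) :
    Fint m a / Real.sinh a ^ m < Fint m r / Real.sinh r ^ m := by
  set G : ℝ → ℝ := fun u => Fint m u / Real.sinh u ^ m with hGdef
  have key : StrictMonoOn G (Ici a) := by
    apply strictMonoOn_of_deriv_pos (convex_Ici a)
    · apply ContinuousOn.div (Fint_cont m).continuousOn (sinh_pow_cont m).continuousOn
      intro t ht
      exact pow_ne_zero m (Real.sinh_pos_iff.2 (lt_of_lt_of_le ha ht)).ne'
    · intro t ht
      rw [interior_Ici] at ht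
      have htpos : 0 < t := lt_trans ha ht
      have hst : 0 < Real.sinh t := Real.sinh_pos_iff.2 htpos
      have hD : HasDerivAt G
          ((Real.sinh t ^ m * Real.sinh t ^ m -
            Fint m t * (((m : ℕ) : ℝ) * Real.sinh t ^ (m - 1) * Real.cosh t)) /
            (Real.sinh t ^ m) ^ 2) t := by
        exact (hasDerivAt_Fint m t).div ((Real.hasDerivAt_sinh t).pow m)
          (pow_ne_zero m hst.ne')
      rw [hD.deriv]
      apply div_pos
      · have hH := H_pos m hm htpos
        have e1 : Real.sinh t ^ m * Real.sinh t ^ m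
            = Real.sinh t ^ (m - 1) * Real.sinh t ^ (m + 1) := by
          rw [← pow_add, ← pow_add]; congr 1; omega
        have e2 : Fint m t * ((m : ℝ) * Real.sinh t ^ (m - 1) * Real.cosh t)
            = Real.sinh t ^ (m - 1) * ((m : ℝ) * Real.cosh t * Fint m t) := by ring
        rw [e1, e2, ← mul_sub]
        exact mul_pos (pow_pos hst _) (by linarith)
      · positivity
  exact key (le_refl a) (le_of_lt har) har

theorem sinh_integral_comparison (b : ℝ) (hb0 : 0 < b) (hb1 : b < 1)
    (m : ℕ) (hm : 0 < m) (x r : ℝ) (hx : 0 < x) (hr : 0 < r)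
    (heq : (∫ t in (0:ℝ)..r, Real.sinh t ^ m) =
      ∫ t in (0:ℝ)..x, ((1 / b) * Real.sinh (b * t)) ^ m) :
    b * x < r ∧
    Real.sinh r ^ m < (1 / b) ^ (m + 1) * Real.sinh (b * x) ^ m ∧
    b * Real.sinh r ^ m < ((1 / b) * Real.sinh (b * x)) ^ m := by
  have hbx : 0 < b * x := mul_pos hb0 hx
  -- rewrite heq as Fint m r = (1/b)^(m+1) * Fint m (b*x)
  have hsub : (∫ t in (0:ℝ)..x, Real.sinh (b * t) ^ m) = b⁻¹ * Fint m (b * x) := by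
    have := intervalIntegral.smul_integral_comp_mul_left
      (a := (0:ℝ)) (b := x) (fun t => Real.sinh t ^ m) b
    rw [mul_zero] at this
    have hb : b ≠ 0 := hb0.ne'
    field_simp [Fint]
    rw [Fint, ← this]
    simp [smul_eq_mul]
  have hFr : Fint m r = (1 / b) ^ (m + 1) * Fint m (b * x) := by
    rw [Fint, heq]
    have : ∀ t : ℝ, ((1 / b) * Real.sinh (b * t)) ^ m
        = (1 / b) ^ m * Real.sinh (b * t) ^ m := fun t => mul_pow _ _ _
    simp_rw [this]
    rw [intervalIntegral.integral_const_mul, hsub]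
    rw [pow_succ]
    field_simp
  have hc1 : (1 : ℝ) < (1 / b) ^ (m + 1) :=
    one_lt_pow₀ (one_lt_one_div hb0 hb1) (by omega)
  have hFbx : 0 < Fint m (b * x) := Fint_pos m hbx
  have hFlt : Fint m (b * x) < Fint m r := by
    rw [hFr]
    nlinarith
  have h1 : b * x < r := by
    by_contra h
    push_neg at h
    exact absurd (Fint_mono m hr.le h) (not_le.2 hFlt)
  have hratio := ratio_lt m hm hbx h1
  have hsbx : 0 < Real.sinh (b * x) := Real.sinh_pos_iff.2 hbx
  have hsr : 0 < Real.sinh r := Real.sinh_pos_iff.2 hr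
  have h2 : Real.sinh r ^ m < (1 / b) ^ (m + 1) * Real.sinh (b * x) ^ m := by
    rw [hFr] at hratio
    rw [div_lt_div_iff₀ (pow_pos hsbx m) (pow_pos hsr m)] at hratio
    nlinarith [hratio, hFbx]
  refine ⟨h1, h2, ?_⟩
  have hb : b ≠ 0 := hb0.ne'
  rw [mul_pow]
  calc b * Real.sinh r ^ m < b * ((1 / b) ^ (m + 1) * Real.sinh (b * x) ^ m) := by
        exact (mul_lt_mul_iff_right₀ hb0).2 h2
    _ = (1 / b) ^ m * Real.sinh (b * x) ^ m := by
        rw [pow_succ]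
        field_simp
end
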